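/- arXiv:2310.03395 — 5 statements merged into one kernel-verified Lean document; each statement's English description precedes it below -/
import Mathlib

section
/- For every r ∈ (0,1), every real z, y ∈ [0,1] and every real w ∈ (0,1), writing w̆ = (1−r)w, ρ̃(w) = 1 − √(1−w²) and Z̃(z,w) = (1 − ρ̃(w))/((1−w)(1 − z·ρ̃(w))), the series Σ_{t≥0} w^t · E[ z^{N×_t} · y^{N•_t} ] converges and equals Z̃(z, w̆) / (1 − r·y·w·Z̃(z, w̆)). -/
/-!
Condition on the last step. Writing `G_t(m) = E[z^{N×_t} y^{N•_t}; x_t = m]`, a reset contributes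
`y E_t` at the origin, while a `±1` step moves `G_t` by one site and picks up a factor `z` when it
lands on the origin. For the generating functions `Ĝ(m) = ∑ wᵗ G_t(m)` this gives, with
`v = (1 - r) w`, the recurrence `v (Ĝ(m - 1) + Ĝ(m + 1)) = 2 Ĝ(m)` away from the origin. Its bounded
solutions on either half-line decay like `(ρ̃(v) / v)^|m|`, so `v Ĝ(±1) = ρ̃(v) Ĝ(0)`, and the two
remaining equations for `Ê = ∑ wᵗ E_t` and `Ĝ(0)` are linear.
-/

open Finset Filter

namespace ResetPolya

/-- Probability weight of an outcome of the reset Pólya walk with horizon `t`: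
independently at each step, the reset indicator is `true` with probability `r`,
and the ±1 step is chosen with probability 1/2 each. -/
noncomputable def wt (r : ℝ) {t : ℕ} (ω : Fin t → Bool × Bool) : ℝ :=
  ∏ k : Fin t, ((if (ω k).1 then r else 1 - r) * (1 / 2))

/-- Position of the reset Pólya walk: `x_0 = 0`; at step `k+1`, the walker is reset
to the origin if the reset indicator holds, otherwise it moves by ±1. -/
def pos {t : ℕ} (ω : Fin t → Bool × Bool) : ℕ → ℤ
  | 0 => 0
  | k + 1 =>
    if h : k < t then
      if (ω ⟨k, h⟩).1 then 0
      else pos ω k + (if (ω ⟨k, h⟩).2 then 1 else -1)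
    else pos ω k

/-- Number of resetting events up to time `t`. -/
def Ndot {t : ℕ} (ω : Fin t → Bool × Bool) : ℕ :=
  (Finset.univ.filter fun k : Fin t => (ω k).1 = true).card

/-- Number of spontaneous returns to the origin up to time `t`. -/
def Ncross {t : ℕ} (ω : Fin t → Bool × Bool) : ℕ :=
  (Finset.univ.filter fun k : Fin t => (ω k).1 = false ∧ pos ω (k.1 + 1) = 0).card

/-- Expectation of an observable of the reset Pólya walk with horizon `t`. -/
noncomputable def expect (r : ℝ) (t : ℕ) (f : (Fin t → Bool × Bool) → ℝ) : ℝ :=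
  ∑ ω : Fin t → Bool × Bool, wt r ω * f ω

open scoped Classical in
/-- Probability of an event for the reset Pólya walk with horizon `t`. -/
noncomputable def prob (r : ℝ) (t : ℕ) (E : (Fin t → Bool × Bool) → Prop) : ℝ :=
  expect r t fun ω => if E ω then 1 else 0

end ResetPolya

namespace ResetPolya

section Snoc

variable {t : ℕ} (ω : Fin t → Bool × Bool) (a : Bool × Bool)

lemma sum_snoc {α : Type*} [Fintype α] (F : (Fin (t + 1) → α) → ℝ) :
    ∑ ω, F ω = ∑ a, ∑ ω : Fin t → α, F (Fin.snoc ω a) := by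
  rw [← (Fin.snocEquiv fun _ => α).sum_comp, Fintype.sum_prod_type]
  rfl

lemma wt_snoc (r : ℝ) :
    wt r (Fin.snoc ω a : Fin (t + 1) → _) = wt r ω * ((if a.1 then r else 1 - r) * (1 / 2)) := by
  simp [wt, Fin.prod_univ_castSucc]

lemma pos_snoc_of_le {k : ℕ} (hk : k ≤ t) : pos (Fin.snoc ω a : Fin (t + 1) → _) k = pos ω k := by
  induction k with
  | zero => rfl
  | succ k ih =>
    have hk' : k < t := hk
    simp only [pos, dif_pos hk', dif_pos (Nat.lt_succ_of_lt hk'), ih hk'.le]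
    rw [show (⟨k, _⟩ : Fin (t + 1)) = Fin.castSucc ⟨k, hk'⟩ from rfl, Fin.snoc_castSucc]

lemma pos_snoc_last :
    pos (Fin.snoc ω a : Fin (t + 1) → _) (t + 1) =
      if a.1 then 0 else pos ω t + if a.2 then 1 else -1 := by
  rw [pos, dif_pos t.lt_succ_self, show (⟨t, _⟩ : Fin (t + 1)) = Fin.last t from rfl,
    Fin.snoc_last, pos_snoc_of_le ω a le_rfl]

lemma Ndot_snoc : Ndot (Fin.snoc ω a : Fin (t + 1) → _) = Ndot ω + if a.1 then 1 else 0 := by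
  simp only [Ndot, Finset.card_filter, Fin.sum_univ_castSucc, Fin.snoc_castSucc, Fin.snoc_last]

lemma Ncross_snoc :
    Ncross (Fin.snoc ω a : Fin (t + 1) → _) =
      Ncross ω + if a.1 = false ∧ pos (Fin.snoc ω a : Fin (t + 1) → _) (t + 1) = 0 then 1 else 0 := by
  simp only [Ncross, Finset.card_filter, Fin.sum_univ_castSucc, Fin.snoc_castSucc, Fin.snoc_last,
    Fin.val_castSucc, Fin.val_last]
  congr 1
  exact Finset.sum_congr rfl fun k _ => by rw [pos_snoc_of_le ω a k.2]

end Snoc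

lemma sum_wt (r : ℝ) (t : ℕ) : ∑ ω : Fin t → Bool × Bool, wt r ω = 1 := by
  have hstep : ∑ a : Bool × Bool, (if a.1 then r else 1 - r) * (1 / 2) = 1 := by
    simp only [Fintype.sum_prod_type, Fintype.sum_bool, ↓reduceIte, Bool.false_eq_true]
    ring
  unfold wt
  rw [← Fintype.prod_sum fun (_ : Fin t) (a : Bool × Bool) =>
    (if a.1 then r else 1 - r) * (1 / 2)]
  simp only [hstep, Finset.prod_const_one]

lemma wt_nonneg {r : ℝ} (hr : r ∈ Set.Icc (0 : ℝ) 1) {t : ℕ} (ω : Fin t → Bool × Bool) :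
    0 ≤ wt r ω :=
  Finset.prod_nonneg fun _ _ => by split_ifs <;> linarith [hr.1, hr.2]

noncomputable def tiltedExpect (r z y : ℝ) (t : ℕ) (g : ℤ → ℝ) : ℝ :=
  expect r t fun ω => z ^ Ncross ω * y ^ Ndot ω * g (pos ω t)

section Tilted

variable (r z y : ℝ)

lemma tiltedExpect_zero (g : ℤ → ℝ) : tiltedExpect r z y 0 g = g 0 := by
  simp [tiltedExpect, expect, wt, Ncross, Ndot, pos]

lemma tiltedExpect_succ (t : ℕ) (g : ℤ → ℝ) :
    tiltedExpect r z y (t + 1) g = r * y * g 0 * tiltedExpect r z y t 1 +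
      (1 - r) / 2 * (tiltedExpect r z y t (fun p => (if p + 1 = 0 then z else 1) * g (p + 1)) +
        tiltedExpect r z y t (fun p => (if p - 1 = 0 then z else 1) * g (p - 1))) := by
  simp only [tiltedExpect, expect, mul_sum, ← sum_add_distrib]
  rw [sum_snoc, Fintype.sum_prod_type]
  simp only [Fintype.sum_bool, ← sum_add_distrib]
  refine sum_congr rfl fun ω _ => ?_
  simp only [wt_snoc, Ndot_snoc, Ncross_snoc, pos_snoc_last]
  simp only [↓reduceIte, Bool.true_eq_false, Bool.false_eq_true, true_and, and_true, add_zero,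
    pow_add, pow_one, pow_zero, pow_ite, mul_one, Pi.one_apply, ← sub_eq_add_neg]
  split_ifs <;> ring

lemma tiltedExpect_add (g₁ g₂ : ℤ → ℝ) (t : ℕ) :
    tiltedExpect r z y t (fun p => g₁ p + g₂ p) =
      tiltedExpect r z y t g₁ + tiltedExpect r z y t g₂ := by
  simp only [tiltedExpect, expect, mul_add, sum_add_distrib]

lemma tiltedExpect_const_mul (c : ℝ) (g : ℤ → ℝ) (t : ℕ) :
    tiltedExpect r z y t (fun p => c * g p) = c * tiltedExpect r z y t g := by
  simp only [tiltedExpect, expect, mul_sum]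
  exact sum_congr rfl fun _ _ => by ring

lemma tiltedExpect_one_succ (t : ℕ) :
    tiltedExpect r z y (t + 1) 1 = (r * y + (1 - r)) * tiltedExpect r z y t 1 +
      (1 - r) / 2 * (z - 1) *
        (tiltedExpect r z y t (Pi.single (-1) 1) + tiltedExpect r z y t (Pi.single 1 1)) := by
  have hup : (fun p : ℤ => (if p + 1 = 0 then z else 1) * (1 : ℤ → ℝ) (p + 1)) =
      fun p => (1 : ℤ → ℝ) p + (z - 1) * (Pi.single (-1) 1 : ℤ → ℝ) p := by
    ext p; simp only [Pi.single_apply, Pi.one_apply]; split_ifs <;> first | (exfalso; omega) | ring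
  have hdown : (fun p : ℤ => (if p - 1 = 0 then z else 1) * (1 : ℤ → ℝ) (p - 1)) =
      fun p => (1 : ℤ → ℝ) p + (z - 1) * (Pi.single 1 1 : ℤ → ℝ) p := by
    ext p; simp only [Pi.single_apply, Pi.one_apply]; split_ifs <;> first | (exfalso; omega) | ring
  rw [tiltedExpect_succ, hup, hdown, tiltedExpect_add, tiltedExpect_add, tiltedExpect_const_mul,
    tiltedExpect_const_mul]
  simp only [Pi.one_apply]
  ring

lemma tiltedExpect_single_zero_succ (t : ℕ) :
    tiltedExpect r z y (t + 1) (Pi.single 0 1) = r * y * tiltedExpect r z y t 1 +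
      (1 - r) / 2 * z *
        (tiltedExpect r z y t (Pi.single (-1) 1) + tiltedExpect r z y t (Pi.single 1 1)) := by
  have hup : (fun p : ℤ => (if p + 1 = 0 then z else 1) * (Pi.single 0 1 : ℤ → ℝ) (p + 1)) =
      fun p => z * (Pi.single (-1) 1 : ℤ → ℝ) p := by
    ext p; simp only [Pi.single_apply]; split_ifs <;> first | (exfalso; omega) | ring
  have hdown : (fun p : ℤ => (if p - 1 = 0 then z else 1) * (Pi.single 0 1 : ℤ → ℝ) (p - 1)) =
      fun p => z * (Pi.single 1 1 : ℤ → ℝ) p := by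
    ext p; simp only [Pi.single_apply]; split_ifs <;> first | (exfalso; omega) | ring
  rw [tiltedExpect_succ, hup, hdown, tiltedExpect_const_mul, tiltedExpect_const_mul]
  simp only [Pi.single_eq_same]
  ring

lemma tiltedExpect_single_succ_of_ne {m : ℤ} (hm : m ≠ 0) (t : ℕ) :
    tiltedExpect r z y (t + 1) (Pi.single m 1) = (1 - r) / 2 *
      (tiltedExpect r z y t (Pi.single (m - 1) 1) + tiltedExpect r z y t (Pi.single (m + 1) 1)) := by
  have hup : (fun p : ℤ => (if p + 1 = 0 then z else 1) * (Pi.single m 1 : ℤ → ℝ) (p + 1)) =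
      Pi.single (m - 1) 1 := by
    ext p; simp only [Pi.single_apply]; split_ifs <;> first | (exfalso; omega) | ring
  have hdown : (fun p : ℤ => (if p - 1 = 0 then z else 1) * (Pi.single m 1 : ℤ → ℝ) (p - 1)) =
      Pi.single (m + 1) 1 := by
    ext p; simp only [Pi.single_apply]; split_ifs <;> first | (exfalso; omega) | ring
  rw [tiltedExpect_succ, hup, hdown, Pi.single_eq_of_ne (Ne.symm hm)]
  ring

end Tilted


lemma abs_tiltedExpect_le {r z y : ℝ} (hr : r ∈ Set.Icc (0 : ℝ) 1) (hz : |z| ≤ 1) (hy : |y| ≤ 1)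
    {g : ℤ → ℝ} (hg : ∀ p, |g p| ≤ 1) (t : ℕ) : |tiltedExpect r z y t g| ≤ 1 := by
  calc |tiltedExpect r z y t g| ≤ ∑ ω, wt r ω := by
        refine (abs_sum_le_sum_abs _ _).trans (sum_le_sum fun ω _ => ?_)
        rw [abs_mul, abs_of_nonneg (wt_nonneg hr ω), abs_mul, abs_mul, abs_pow, abs_pow]
        refine mul_le_of_le_one_right (wt_nonneg hr ω) (mul_le_one₀ ?_ (abs_nonneg _) (hg _))
        exact mul_le_one₀ (pow_le_one₀ (abs_nonneg _) hz) (by positivity)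
          (pow_le_one₀ (abs_nonneg _) hy)
    _ = 1 := sum_wt r t

lemma abs_single_one_le (m p : ℤ) : |(Pi.single m 1 : ℤ → ℝ) p| ≤ 1 := by
  rw [Pi.single_apply]; split_ifs <;> simp

noncomputable def tiltedGF (r z y w : ℝ) (g : ℤ → ℝ) : ℝ :=
  ∑' t, w ^ t * tiltedExpect r z y t g

section GeneratingFunction

variable {r z y w : ℝ}

lemma norm_pow_mul_tiltedExpect_le (hr : r ∈ Set.Icc (0 : ℝ) 1) (hz : |z| ≤ 1) (hy : |y| ≤ 1)
    {g : ℤ → ℝ} (hg : ∀ p, |g p| ≤ 1) (t : ℕ) :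
    ‖w ^ t * tiltedExpect r z y t g‖ ≤ |w| ^ t := by
  rw [Real.norm_eq_abs, abs_mul, abs_pow]
  exact mul_le_of_le_one_right (by positivity) (abs_tiltedExpect_le hr hz hy hg t)

lemma hasSum_tiltedGF (hr : r ∈ Set.Icc (0 : ℝ) 1) (hz : |z| ≤ 1) (hy : |y| ≤ 1) (hw : |w| < 1)
    {g : ℤ → ℝ} (hg : ∀ p, |g p| ≤ 1) :
    HasSum (fun t => w ^ t * tiltedExpect r z y t g) (tiltedGF r z y w g) :=
  (Summable.of_norm_bounded (summable_geometric_of_lt_one (abs_nonneg w) hw)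
    (norm_pow_mul_tiltedExpect_le hr hz hy hg)).hasSum

lemma abs_tiltedGF_le (hr : r ∈ Set.Icc (0 : ℝ) 1) (hz : |z| ≤ 1) (hy : |y| ≤ 1) (hw : |w| < 1)
    {g : ℤ → ℝ} (hg : ∀ p, |g p| ≤ 1) : |tiltedGF r z y w g| ≤ (1 - |w|)⁻¹ :=
  tsum_of_norm_bounded (hasSum_geometric_of_lt_one (abs_nonneg w) hw)
    (norm_pow_mul_tiltedExpect_le hr hz hy hg)

lemma eq_add_mul_of_hasSum_succ {a : ℕ → ℝ} {A B : ℝ} (ha : HasSum (fun t => w ^ t * a t) A)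
    (hb : HasSum (fun t => w ^ t * a (t + 1)) B) : A = a 0 + w * B := by
  have hshift := (hasSum_nat_add_iff' 1).mpr ha
  simp only [sum_range_one, pow_zero, one_mul, pow_succ] at hshift
  have hshift' : HasSum (fun t => w ^ t * w * a (t + 1)) (w * B) :=
    (hb.mul_left w).congr_fun fun t => by ring
  linarith [hshift.unique hshift']

variable (hr : r ∈ Set.Icc (0 : ℝ) 1) (hz : |z| ≤ 1) (hy : |y| ≤ 1) (hw : |w| < 1)
include hr hz hy hw

lemma tiltedGF_one :
    tiltedGF r z y w 1 = 1 + w * ((r * y + (1 - r)) * tiltedGF r z y w 1 + (1 - r) / 2 * (z - 1) *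
      (tiltedGF r z y w (Pi.single (-1) 1) + tiltedGF r z y w (Pi.single 1 1))) := by
  have hone := hasSum_tiltedGF hr hz hy hw (g := 1) (by simp)
  have hdown := hasSum_tiltedGF hr hz hy hw (abs_single_one_le (-1))
  have hup := hasSum_tiltedGF hr hz hy hw (abs_single_one_le 1)
  have hsucc : HasSum (fun t => w ^ t * tiltedExpect r z y (t + 1) 1)
      ((r * y + (1 - r)) * tiltedGF r z y w 1 + (1 - r) / 2 * (z - 1) *
        (tiltedGF r z y w (Pi.single (-1) 1) + tiltedGF r z y w (Pi.single 1 1))) := by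
    refine ((hone.mul_left _).add ((hdown.add hup).mul_left _)).congr_fun fun t => ?_
    rw [tiltedExpect_one_succ]
    ring
  exact (eq_add_mul_of_hasSum_succ hone hsucc).trans (by rw [tiltedExpect_zero, Pi.one_apply])

lemma tiltedGF_single_zero :
    tiltedGF r z y w (Pi.single 0 1) = 1 + w * (r * y * tiltedGF r z y w 1 + (1 - r) / 2 * z *
      (tiltedGF r z y w (Pi.single (-1) 1) + tiltedGF r z y w (Pi.single 1 1))) := by
  have hone := hasSum_tiltedGF hr hz hy hw (g := 1) (by simp)
  have hdown := hasSum_tiltedGF hr hz hy hw (abs_single_one_le (-1))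
  have hup := hasSum_tiltedGF hr hz hy hw (abs_single_one_le 1)
  have hsucc : HasSum (fun t => w ^ t * tiltedExpect r z y (t + 1) (Pi.single 0 1))
      (r * y * tiltedGF r z y w 1 + (1 - r) / 2 * z *
        (tiltedGF r z y w (Pi.single (-1) 1) + tiltedGF r z y w (Pi.single 1 1))) := by
    refine ((hone.mul_left _).add ((hdown.add hup).mul_left _)).congr_fun fun t => ?_
    rw [tiltedExpect_single_zero_succ]
    ring
  rw [eq_add_mul_of_hasSum_succ (hasSum_tiltedGF hr hz hy hw (abs_single_one_le 0)) hsucc,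
    tiltedExpect_zero, Pi.single_eq_same]

lemma tiltedGF_single_of_ne {m : ℤ} (hm : m ≠ 0) :
    tiltedGF r z y w (Pi.single m 1) = (1 - r) * w / 2 *
      (tiltedGF r z y w (Pi.single (m - 1) 1) + tiltedGF r z y w (Pi.single (m + 1) 1)) := by
  have hdown := hasSum_tiltedGF hr hz hy hw (abs_single_one_le (m - 1))
  have hup := hasSum_tiltedGF hr hz hy hw (abs_single_one_le (m + 1))
  have hsucc : HasSum (fun t => w ^ t * tiltedExpect r z y (t + 1) (Pi.single m 1))
      ((1 - r) / 2 *
        (tiltedGF r z y w (Pi.single (m - 1) 1) + tiltedGF r z y w (Pi.single (m + 1) 1))) := by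
    refine ((hdown.add hup).mul_left _).congr_fun fun t => ?_
    rw [tiltedExpect_single_succ_of_ne r z y hm]
    ring
  rw [eq_add_mul_of_hasSum_succ (hasSum_tiltedGF hr hz hy hw (abs_single_one_le m)) hsucc,
    tiltedExpect_zero, Pi.single_eq_of_ne (Ne.symm hm)]
  ring

end GeneratingFunction


lemma eq_zero_of_succ_eq_mul_of_bounded {q C : ℝ} (hq : 1 < q) {e : ℕ → ℝ}
    (he : ∀ n, e (n + 1) = q * e n) (hC : ∀ n, |e n| ≤ C) : e 0 = 0 := by
  have hpow : ∀ n, e n = q ^ n * e 0 := fun n => by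
    induction n with
    | zero => simp
    | succ n ih => rw [he, ih, pow_succ]; ring
  by_contra h0
  obtain ⟨n, hn⟩ := pow_unbounded_of_one_lt (C / |e 0|) hq
  rw [div_lt_iff₀ (abs_pos.2 h0)] at hn
  have hCn := hC n
  rw [hpow, abs_mul, abs_of_pos (by positivity)] at hCn
  linarith

/-- The characteristic roots of `v (u n + u (n + 2)) = 2 u (n + 1)` are `ρ / v` and `v / ρ`, where
`ρ = 1 - √(1 - v²) < v`; a bounded solution has no component along the growing one. -/
lemma mul_one_eq_of_bounded_recurrence {v C : ℝ} (hv0 : 0 < v) (hv1 : v < 1) {u : ℕ → ℝ}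
    (hC : ∀ n, |u n| ≤ C) (hu : ∀ n, u (n + 1) = v / 2 * (u n + u (n + 2))) :
    v * u 1 = (1 - √(1 - v ^ 2)) * u 0 := by
  set ρ := 1 - √(1 - v ^ 2) with hρ
  have hsq : √(1 - v ^ 2) ^ 2 = 1 - v ^ 2 := Real.sq_sqrt (by nlinarith)
  have hroot : v ^ 2 = ρ * (2 - ρ) := by rw [hρ]; linear_combination hsq
  have hρ0 : 0 < ρ := by
    have : √(1 - v ^ 2) < 1 := (Real.sqrt_lt' one_pos).2 (by nlinarith)
    linarith
  have hρv : ρ < v := by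
    have : 1 - v < √(1 - v ^ 2) := (Real.lt_sqrt (by linarith)).2 (by nlinarith)
    linarith
  set e : ℕ → ℝ := fun n => v * u (n + 1) - ρ * u n with he
  have hgrow : ∀ n, e (n + 1) = v / ρ * e n := fun n => by
    have hstep : ρ * e (n + 1) = v * e n := by
      simp only [he]
      linear_combination (-2 * ρ) * hu n - u (n + 1) * hroot
    rw [div_mul_eq_mul_div, eq_div_iff hρ0.ne']
    linarith
  have hbdd : ∀ n, |e n| ≤ (v + ρ) * C := fun n => by
    calc |e n| ≤ v * |u (n + 1)| + ρ * |u n| := by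
          refine (abs_sub _ _).trans ?_
          rw [abs_mul, abs_mul, abs_of_pos hv0, abs_of_pos hρ0]
      _ ≤ (v + ρ) * C := by nlinarith [hC n, hC (n + 1)]
  have he0 := eq_zero_of_succ_eq_mul_of_bounded ((one_lt_div hρ0).2 hρv) hgrow hbdd
  simp only [he] at he0
  linarith

lemma mul_tiltedGF_single_sign_eq {r z y w : ℝ} (hr : r ∈ Set.Ico (0 : ℝ) 1) (hz : |z| ≤ 1)
    (hy : |y| ≤ 1) (hw : w ∈ Set.Ioo (0 : ℝ) 1) {σ : ℤ} (hσ : σ = 1 ∨ σ = -1) :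
    (1 - r) * w * tiltedGF r z y w (Pi.single σ 1) =
      (1 - √(1 - ((1 - r) * w) ^ 2)) * tiltedGF r z y w (Pi.single 0 1) := by
  obtain ⟨hr0, hr1⟩ := hr
  obtain ⟨hw0, hw1⟩ := hw
  have hr' : r ∈ Set.Icc (0 : ℝ) 1 := ⟨hr0, hr1.le⟩
  have hw' : |w| < 1 := by rwa [abs_of_pos hw0]
  have hu (n : ℕ) : tiltedGF r z y w (Pi.single (σ * (n + 1 : ℕ)) 1) = (1 - r) * w / 2 *
      (tiltedGF r z y w (Pi.single (σ * n) 1) + tiltedGF r z y w (Pi.single (σ * (n + 2 : ℕ)) 1)) := by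
    rw [tiltedGF_single_of_ne hr' hz hy hw' (by rcases hσ with rfl | rfl <;> omega)]
    rcases hσ with rfl | rfl <;> push_cast <;> ring_nf
  simpa using mul_one_eq_of_bounded_recurrence (by nlinarith) (by nlinarith)
    (u := fun n : ℕ => tiltedGF r z y w (Pi.single (σ * n) 1))
    (fun n => abs_tiltedGF_le hr' hz hy hw' (abs_single_one_le _)) hu

lemma eq_of_gf_system {r y z w v ρ E G0 Gp Gm : ℝ} (hv : v = (1 - r) * w) (hv1 : v < 1)
    (hz : z ≤ 1) (hρ0 : 0 ≤ ρ) (hρ1 : ρ < 1)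
    (hE : E = 1 + w * ((r * y + (1 - r)) * E + (1 - r) / 2 * (z - 1) * (Gm + Gp)))
    (hG0 : G0 = 1 + w * (r * y * E + (1 - r) / 2 * z * (Gm + Gp)))
    (hGp : v * Gp = ρ * G0) (hGm : v * Gm = ρ * G0) :
    E = (1 - ρ) / ((1 - v) * (1 - z * ρ)) /
      (1 - r * y * w * ((1 - ρ) / ((1 - v) * (1 - z * ρ)))) := by
  subst hv
  have hEG : E * (1 - (1 - r) * w) = G0 * (1 - ρ) := by
    linear_combination hE - hG0 - hGp / 2 - hGm / 2
  have hGE : G0 * (1 - z * ρ) = 1 + r * y * w * E := by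
    linear_combination hG0 + z / 2 * hGp + z / 2 * hGm
  have hD : 0 < (1 - (1 - r) * w) * (1 - z * ρ) :=
    mul_pos (by linarith) (by nlinarith)
  set Z := (1 - ρ) / ((1 - (1 - r) * w) * (1 - z * ρ))
  have hZ0 : Z ≠ 0 := div_ne_zero (by linarith) hD.ne'
  have hEZ : E * (1 - r * y * w * Z) = Z := by
    have hZD : Z * ((1 - (1 - r) * w) * (1 - z * ρ)) = 1 - ρ := div_mul_cancel₀ _ hD.ne'
    apply mul_right_cancel₀ hD.ne'
    linear_combination (1 - z * ρ) * hEG + (1 - ρ) * hGE - (r * y * w * E + 1) * hZD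
  have hden : 1 - r * y * w * Z ≠ 0 := fun h => hZ0 (by rw [← hEZ, h, mul_zero])
  rw [eq_div_iff hden, hEZ]

end ResetPolya

open ResetPolya

/-- The generating function, in the time variable, of the joint probability
generating function of the numbers of spontaneous returns to the origin and of
resetting events of the reset Pólya walk. -/
theorem statement0 (r : ℝ) (hr : r ∈ Set.Ioo (0 : ℝ) 1)
    (z : ℝ) (hz : z ∈ Set.Icc (0 : ℝ) 1) (y : ℝ) (hy : y ∈ Set.Icc (0 : ℝ) 1)
    (w : ℝ) (hw : w ∈ Set.Ioo (0 : ℝ) 1)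
    (wb : ℝ) (hwb : wb = (1 - r) * w)
    (ρ : ℝ → ℝ) (hρ : ∀ v, ρ v = 1 - Real.sqrt (1 - v ^ 2))
    (Z : ℝ → ℝ → ℝ) (hZ : ∀ a v, Z a v = (1 - ρ v) / ((1 - v) * (1 - a * ρ v))) :
    HasSum (fun t : ℕ => w ^ t * expect r t (fun ω => z ^ Ncross ω * y ^ Ndot ω))
      (Z z wb / (1 - r * y * w * Z z wb)) := by
  obtain ⟨hr0, hr1⟩ := hr
  obtain ⟨hz0, hz1⟩ := hz
  obtain ⟨hy0, hy1⟩ := hy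
  obtain ⟨hw0, hw1⟩ := hw
  have hr' : r ∈ Set.Icc (0 : ℝ) 1 := ⟨hr0.le, hr1.le⟩
  have hz' : |z| ≤ 1 := abs_le.2 ⟨by linarith, hz1⟩
  have hy' : |y| ≤ 1 := abs_le.2 ⟨by linarith, hy1⟩
  have hw' : |w| < 1 := by rwa [abs_of_pos hw0]
  have hv0 : 0 < wb := by rw [hwb]; nlinarith
  have hv1 : wb < 1 := by rw [hwb]; nlinarith
  have hρ0 : 0 ≤ ρ wb := by
    rw [hρ, sub_nonneg]; exact Real.sqrt_le_one.2 (by nlinarith)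
  have hρ1 : ρ wb < 1 := by
    rw [hρ]; linarith [Real.sqrt_pos.2 (by nlinarith : 0 < 1 - wb ^ 2)]
  have hside (σ : ℤ) (hσ : σ = 1 ∨ σ = -1) :
      wb * tiltedGF r z y w (Pi.single σ 1) = ρ wb * tiltedGF r z y w (Pi.single 0 1) := by
    rw [hwb, hρ]; exact mul_tiltedGF_single_sign_eq ⟨hr0.le, hr1⟩ hz' hy' ⟨hw0, hw1⟩ hσ
  rw [hZ, ← eq_of_gf_system hwb hv1 hz1 hρ0 hρ1 (tiltedGF_one hr' hz' hy' hw')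
    (tiltedGF_single_zero hr' hz' hy' hw') (hside 1 (.inl rfl)) (hside (-1) (.inr rfl))]
  exact (hasSum_tiltedGF hr' hz' hy' hw' (g := 1) (by simp)).congr_fun fun t => by
    simp [tiltedExpect]
end

section
/- For every r ∈ (0,1) and every real w ∈ (0,1), writing w̆ = (1−r)w and ρ̃(w) = 1 − √(1−w²), the generating function of the first spontaneous return time T^{(r)} of the reset Pólya walk satisfies Σ_{τ≥1} w^τ · P(T^{(r)} = τ) = (1−w̆)·ρ̃(w̆) / (1 − w + r·w·ρ̃(w̆)). -/
open Finset Filter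

open ResetPolya

namespace ResetPolya

/-- The event, for the reset Pólya walk with horizon `τ`, that the first spontaneous
return to the origin occurs exactly at time `τ`: step `τ` is a spontaneous return
(reset indicator `false` and position `0`), and no earlier step is. -/
def FirstReturnAtEnd {τ : ℕ} (ω : Fin τ → Bool × Bool) : Prop :=
  ∀ k : Fin τ, (((ω k).1 = false ∧ pos ω (k.1 + 1) = 0) ↔ k.1 + 1 = τ)

end ResetPolya

/-!
Decompose a path at its first reset. Before it the walk is a simple random walk that must avoid
the origin, after it the walk starts afresh; this gives the renewal equation
`a (n + 1) = (1 - r) ^ (n + 1) f (n + 1) + r ∑_{k + l = n} (1 - r) ^ k q k a l`,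
where `f` and `q` are the first-return and survival probabilities of the simple random walk.
Their generating functions are `F v = 1 - √(1 - v²)` and `Q v = √(1 - v²) / (1 - v)`: the
generating function `G` of the first passage to `-1` solves `G = v (1 + G²) / 2` (condition on
the first step, and cut a passage to `-2` at its first visit to `-1`), reflection gives
`f (n + 1) = g n`, and `q n - q (n + 1) = f (n + 1)`. Solving
`A = F(w̆) + r w Q(w̆) A` for the generating function `A` of `a` gives the formula.
-/

namespace ResetPolya

open scoped Classical

section PathProb

variable {α : Type*} [Fintype α] (p : α → ℝ) {n : ℕ}

noncomputable def pathProb (P : (Fin n → α) → Prop) : ℝ :=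
  ∑ s, if P s then ∏ k, p (s k) else 0

variable {p}

theorem pathProb_congr {P Q : (Fin n → α) → Prop} (h : ∀ s, P s ↔ Q s) :
    pathProb p P = pathProb p Q := by
  simp only [pathProb, h]

theorem pathProb_nonneg (hp : ∀ x, 0 ≤ p x) (P : (Fin n → α) → Prop) : 0 ≤ pathProb p P :=
  Finset.sum_nonneg fun s _ => by
    split_ifs
    exacts [Finset.prod_nonneg fun k _ => hp (s k), le_rfl]

theorem pathProb_true : pathProb p (fun _ : Fin n → α => True) = (∑ x, p x) ^ n := by
  simp [pathProb, Fintype.sum_pow]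

theorem pathProb_le_one (hp : ∀ x, 0 ≤ p x) (hp1 : ∑ x, p x = 1) (P : (Fin n → α) → Prop) :
    pathProb p P ≤ 1 := by
  calc pathProb p P ≤ pathProb p (fun _ => True) :=
        Finset.sum_le_sum fun s _ => by
          rw [if_pos trivial]
          split_ifs
          exacts [le_rfl, Finset.prod_nonneg fun k _ => hp (s k)]
    _ = 1 := by rw [pathProb_true, hp1, one_pow]

theorem pathProb_eq_and_add_and_not (P Q : (Fin n → α) → Prop) :
    pathProb p P = pathProb p (fun s => P s ∧ Q s) + pathProb p (fun s => P s ∧ ¬ Q s) := by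
  rw [pathProb, pathProb, pathProb, ← Finset.sum_add_distrib]
  refine Finset.sum_congr rfl fun s _ => ?_
  by_cases P s <;> by_cases Q s <;> simp [*]

theorem pathProb_eq_sum_range {P : (Fin n → α) → Prop} (N : ℕ) (H : ℕ → (Fin n → α) → Prop)
    (hex : ∀ s, P s → ∃ j < N, H j s) (huniq : ∀ s i j, H i s → H j s → i = j) :
    pathProb p P = ∑ j ∈ range N, pathProb p (fun s => P s ∧ H j s) := by
  simp only [pathProb]
  rw [Finset.sum_comm]
  refine Finset.sum_congr rfl fun s _ => ?_
  by_cases hP : P s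
  · obtain ⟨j, hjN, hj⟩ := hex s hP
    rw [Finset.sum_eq_single_of_mem j (Finset.mem_range.2 hjN) fun i _ hij => ?_]
    · simp [hP, hj]
    · exact if_neg fun h => hij (huniq s i j h.2 hj)
  · simp [hP]

theorem pathProb_cons (P : (Fin (n + 1) → α) → Prop) :
    pathProb p P = ∑ x, p x * pathProb p (fun t => P (Fin.cons x t)) := by
  simp only [pathProb, Finset.mul_sum]
  rw [← (Fin.consEquiv fun _ => α).sum_comp, Fintype.sum_prod_type]
  refine Finset.sum_congr rfl fun x _ => Finset.sum_congr rfl fun t _ => ?_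
  simp [Fin.consEquiv, Fin.prod_univ_succ]

theorem pathProb_append {j m : ℕ} {P : (Fin (j + m) → α) → Prop} {A : (Fin j → α) → Prop}
    {B : (Fin m → α) → Prop} (h : ∀ a b, P (Fin.append a b) ↔ A a ∧ B b) :
    pathProb p P = pathProb p A * pathProb p B := by
  simp only [pathProb, Finset.sum_mul_sum]
  rw [← (Fin.appendEquiv j m).sum_comp, Fintype.sum_prod_type]
  refine Finset.sum_congr rfl fun a _ => Finset.sum_congr rfl fun b _ => ?_
  change (if P (Fin.append a b) then _ else _) = _
  by_cases A a <;> by_cases B b <;> simp [*, Fin.prod_univ_add]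

theorem pathProb_comp_involutive {f : α → α} (hf : Function.Involutive f)
    (hp : ∀ x, p (f x) = p x) (P : (Fin n → α) → Prop) :
    pathProb p (fun s => P (fun k => f (s k))) = pathProb p P := by
  refine Fintype.sum_equiv (Equiv.piCongrRight fun _ => hf.toPerm) _ _ fun s => ?_
  change _ = if P (fun k => f (s k)) then ∏ k, p (f (s k)) else 0
  simp only [hp]

theorem pathProb_singleton (c : Fin n → α) : pathProb p (fun s => s = c) = ∏ k, p (c k) := by
  rw [pathProb, Fintype.sum_eq_single c fun s hs => by simp [hs]]
  simp

theorem pathProb_prod {β : Type*} [Fintype β] {p : α × β → ℝ} (p₁ : α → ℝ) (p₂ : β → ℝ)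
    (hp : ∀ x, p x = p₁ x.1 * p₂ x.2) {P : (Fin n → α × β) → Prop} {A : (Fin n → α) → Prop}
    {B : (Fin n → β) → Prop} (h : ∀ c s, P (fun k => (c k, s k)) ↔ A c ∧ B s) :
    pathProb p P = pathProb p₁ A * pathProb p₂ B := by
  simp only [pathProb, Finset.sum_mul_sum]
  rw [← (Equiv.arrowProdEquivProdArrow _ (fun _ => α) (fun _ => β)).symm.sum_comp,
    Fintype.sum_prod_type]
  refine Finset.sum_congr rfl fun c _ => Finset.sum_congr rfl fun s _ => ?_
  simp only [Equiv.arrowProdEquivProdArrow, Equiv.coe_fn_symm_mk, h, hp, Finset.prod_mul_distrib]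
  by_cases A c <;> by_cases B s <;> simp [*]

end PathProb

section Walk

variable {n : ℕ}

/-- `true` is a step up; the walk is frozen after time `n`. -/
def walk (s : Fin n → Bool) : ℕ → ℤ
  | 0 => 0
  | k + 1 => if h : k < n then walk s k + (if s ⟨k, h⟩ then 1 else -1) else walk s k

@[simp]
theorem walk_zero (s : Fin n → Bool) : walk s 0 = 0 := rfl

theorem walk_succ_of_lt (s : Fin n → Bool) {k : ℕ} (h : k < n) :
    walk s (k + 1) = walk s k + if s ⟨k, h⟩ then 1 else -1 := by
  simp [walk, h]

theorem walk_succ_of_le (s : Fin n → Bool) {k : ℕ} (h : n ≤ k) : walk s (k + 1) = walk s k := by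
  simp [walk, Nat.not_lt.2 h]

theorem walk_sub_one_le_walk_succ (s : Fin n → Bool) (k : ℕ) : walk s k - 1 ≤ walk s (k + 1) := by
  rcases lt_or_ge k n with h | h
  · rw [walk_succ_of_lt s h]
    split_ifs <;> omega
  · rw [walk_succ_of_le s h]
    omega

theorem walk_cons (x : Bool) (s : Fin n → Bool) (k : ℕ) :
    walk (Fin.cons x s : Fin (n + 1) → Bool) (k + 1) = (if x then 1 else -1) + walk s k := by
  induction k with
  | zero => simp [walk_succ_of_lt _ n.succ_pos]
  | succ k ih =>
    rcases lt_or_ge k n with h | h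
    · rw [walk_succ_of_lt _ (by omega : k + 1 < n + 1), ih, walk_succ_of_lt s h]
      rw [← Fin.succ_mk _ _ h, Fin.cons_succ]
      ring
    · rw [walk_succ_of_le _ (by omega : n + 1 ≤ k + 1), ih, walk_succ_of_le s h]

theorem walk_not (s : Fin n → Bool) (k : ℕ) : walk (fun i => !s i) k = -walk s k := by
  induction k with
  | zero => simp
  | succ k ih =>
    rcases lt_or_ge k n with h | h
    · rw [walk_succ_of_lt _ h, walk_succ_of_lt s h, ih]
      cases s ⟨k, h⟩ <;> simp <;> ring
    · rw [walk_succ_of_le _ h, walk_succ_of_le s h, ih]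

variable {j m : ℕ} (a : Fin j → Bool) (b : Fin m → Bool)

theorem walk_append_left {k : ℕ} (h : k ≤ j) : walk (Fin.append a b) k = walk a k := by
  induction k with
  | zero => rfl
  | succ k ih =>
    rw [walk_succ_of_lt _ (by omega : k < j + m), walk_succ_of_lt a h, ih (by omega),
      ← Fin.castAdd_mk, Fin.append_left]

theorem walk_append_right (i : ℕ) : walk (Fin.append a b) (j + i) = walk a j + walk b i := by
  induction i with
  | zero => simp [walk_append_left a b le_rfl]
  | succ i ih =>
    rcases lt_or_ge i m with h | h
    · rw [← add_assoc, walk_succ_of_lt _ (by omega : j + i < j + m), ih, walk_succ_of_lt b h,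
        ← Fin.natAdd_mk _ _ h, Fin.append_right]
      ring
    · rw [← add_assoc, walk_succ_of_le _ (by omega : j + m ≤ j + i), ih, walk_succ_of_le b h]

theorem exists_walk_eq_neg_one {N : ℕ} (s : Fin n → Bool) (h : walk s N ≤ -1) :
    ∃ j ≤ N, walk s j = -1 ∧ ∀ k < j, 0 ≤ walk s k := by
  have hex : ∃ j, walk s j ≤ -1 := ⟨N, h⟩
  have hmin : ∀ k < Nat.find hex, 0 ≤ walk s k := fun k hk => by
    have := Nat.find_min hex hk
    omega
  refine ⟨Nat.find hex, Nat.find_min' hex h, ?_, hmin⟩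
  have hfind := Nat.find_spec hex
  obtain ⟨j, hj⟩ : ∃ j, Nat.find hex = j + 1 :=
    Nat.exists_eq_succ_of_ne_zero fun h0 => by simp [h0] at hfind
  have := walk_sub_one_le_walk_succ s j
  have := hmin j (by omega)
  rw [hj] at hfind ⊢
  omega

end Walk

section SimpleRandomWalk

noncomputable def fairCoin : Bool → ℝ := fun _ => 1 / 2

theorem fairCoin_nonneg (x : Bool) : 0 ≤ fairCoin x := by norm_num [fairCoin]

theorem sum_fairCoin : ∑ x, fairCoin x = 1 := by norm_num [fairCoin]

variable {n : ℕ}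

def IsFirstPassage (d : ℕ) (s : Fin n → Bool) : Prop :=
  (∀ k < n, -(d : ℤ) < walk s k) ∧ walk s n = -d

def IsFirstReturn (s : Fin n → Bool) : Prop :=
  0 < n ∧ ∀ k : Fin n, (walk s (k + 1) = 0 ↔ k.1 + 1 = n)

def AvoidsOriginUpTo (N : ℕ) (s : Fin n → Bool) : Prop :=
  ∀ k < N, walk s (k + 1) ≠ 0

variable (n) in
noncomputable def firstPassageProb (d : ℕ) : ℝ := pathProb fairCoin (IsFirstPassage d (n := n))

variable (n) in
noncomputable def firstReturnProb : ℝ := pathProb fairCoin (IsFirstReturn (n := n))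

variable (n) in
noncomputable def survivalProb : ℝ := pathProb fairCoin (AvoidsOriginUpTo n (n := n))

theorem isFirstPassage_zero_iff (s : Fin n → Bool) : IsFirstPassage 0 s ↔ n = 0 := by
  refine ⟨fun ⟨h, _⟩ => ?_, fun h => ?_⟩
  · by_contra hn
    simpa using h 0 (Nat.pos_of_ne_zero hn)
  · subst h
    simp [IsFirstPassage]

theorem isFirstPassage_cons_true_iff (d : ℕ) (s : Fin n → Bool) :
    IsFirstPassage (d + 1) (Fin.cons true s : Fin (n + 1) → Bool) ↔ IsFirstPassage (d + 2) s := by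
  simp only [IsFirstPassage, Nat.forall_lt_succ_left, walk_cons, if_true, walk_zero]
  push_cast
  constructor
  · rintro ⟨⟨-, h⟩, h'⟩
    exact ⟨fun k hk => by have := h k hk; omega, by omega⟩
  · rintro ⟨h, h'⟩
    exact ⟨⟨by omega, fun k hk => by have := h k hk; omega⟩, by omega⟩

theorem isFirstPassage_cons_false_iff (d : ℕ) (s : Fin n → Bool) :
    IsFirstPassage (d + 1) (Fin.cons false s : Fin (n + 1) → Bool) ↔ IsFirstPassage d s := by
  simp only [IsFirstPassage, Nat.forall_lt_succ_left, walk_cons, walk_zero]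
  push_cast
  constructor
  · rintro ⟨⟨-, h⟩, h'⟩
    exact ⟨fun k hk => by have := h k hk; omega, by omega⟩
  · rintro ⟨h, h'⟩
    exact ⟨⟨by omega, fun k hk => by have := h k hk; omega⟩, by omega⟩

theorem isFirstPassage_succ_append_iff {j m : ℕ} (d : ℕ) (a : Fin j → Bool) (b : Fin m → Bool) :
    (IsFirstPassage (d + 1) (Fin.append a b) ∧
        walk (Fin.append a b) j = -1 ∧ ∀ k < j, 0 ≤ walk (Fin.append a b) k) ↔
      IsFirstPassage 1 a ∧ IsFirstPassage d b := by
  have hleft : ∀ k ≤ j, walk (Fin.append a b) k = walk a k := fun k hk =>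
    walk_append_left a b hk
  have hright := walk_append_right a b
  simp only [IsFirstPassage]
  push_cast
  constructor
  · rintro ⟨⟨hlow, hend⟩, hj, hbefore⟩
    rw [hleft j le_rfl] at hj
    refine ⟨⟨fun k hk => ?_, hj⟩, fun k hk => ?_, ?_⟩
    · have := hbefore k hk
      rw [hleft k hk.le] at this
      omega
    · have := hlow (j + k) (by omega)
      rw [hright] at this
      omega
    · rw [hright] at hend
      omega
  · rintro ⟨⟨ha, haj⟩, hb, hbm⟩
    refine ⟨⟨fun k hk => ?_, by rw [hright]; omega⟩, by rw [hleft j le_rfl, haj], fun k hk => ?_⟩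
    · rcases lt_or_ge k j with hkj | hkj
      · have := ha k hkj
        rw [hleft k hkj.le]
        omega
      · obtain ⟨i, rfl⟩ := Nat.exists_eq_add_of_le hkj
        have := hb i (by omega)
        rw [hright]
        omega
    · have := ha k hk
      rw [hleft k hk.le]
      omega

theorem firstPassageProb_level_succ (n d : ℕ) :
    firstPassageProb n (d + 1) =
      ∑ kl ∈ antidiagonal n, firstPassageProb kl.1 1 * firstPassageProb kl.2 d := by
  rw [firstPassageProb, pathProb_eq_sum_range (n + 1)
      (fun j s => walk s j = -1 ∧ ∀ k < j, 0 ≤ walk s k) (fun s hs => ?_) (fun s i j hi hj => ?_),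
    Finset.Nat.sum_antidiagonal_eq_sum_range_succ
      (fun k l => firstPassageProb k 1 * firstPassageProb l d)]
  · refine Finset.sum_congr rfl fun j hj => ?_
    obtain ⟨m, rfl⟩ := Nat.exists_eq_add_of_le (Finset.mem_range_succ_iff.1 hj)
    rw [Nat.add_sub_cancel_left]
    exact pathProb_append (isFirstPassage_succ_append_iff d)
  · obtain ⟨j, hjn, hj⟩ := exists_walk_eq_neg_one s (N := n) (by rw [hs.2]; omega)
    exact ⟨j, by omega, hj⟩
  · rcases lt_trichotomy i j with hij | hij | hij
    · have := hj.2 i hij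
      omega
    · exact hij
    · have := hi.2 j hij
      omega

theorem firstPassageProb_level_zero (n : ℕ) : firstPassageProb n 0 = if n = 0 then 1 else 0 := by
  rw [firstPassageProb, pathProb_congr isFirstPassage_zero_iff]
  split_ifs with hn
  · subst hn
    simp [pathProb]
  · simp [pathProb, hn]

theorem firstPassageProb_succ_succ (n d : ℕ) :
    firstPassageProb (n + 1) (d + 1) = (firstPassageProb n (d + 2) + firstPassageProb n d) / 2 := by
  rw [firstPassageProb, pathProb_cons, Fintype.sum_bool,
    pathProb_congr (isFirstPassage_cons_true_iff d),
    pathProb_congr (isFirstPassage_cons_false_iff d)]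
  simp only [fairCoin, firstPassageProb]
  ring

theorem firstPassageProb_zero_one : firstPassageProb 0 1 = 0 := by
  simp [firstPassageProb, pathProb, IsFirstPassage]

theorem firstPassageProb_succ_one (n : ℕ) :
    firstPassageProb (n + 1) 1 =
      (∑ kl ∈ antidiagonal n, firstPassageProb kl.1 1 * firstPassageProb kl.2 1 +
        if n = 0 then 1 else 0) / 2 := by
  rw [← firstPassageProb_level_succ n 1, ← firstPassageProb_level_zero]
  exact firstPassageProb_succ_succ n 0

theorem isFirstReturn_cons_true_iff (s : Fin n → Bool) :
    IsFirstReturn (Fin.cons true s : Fin (n + 1) → Bool) ↔ IsFirstPassage 1 s := by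
  simp only [IsFirstReturn, IsFirstPassage, Fin.forall_iff, walk_cons, if_true,
    Nat.forall_lt_succ_right, Nat.cast_one, n.succ_pos, true_and, iff_true]
  constructor
  · rintro ⟨hbefore, hend⟩
    refine ⟨fun k hk => ?_, by omega⟩
    by_contra hneg
    obtain ⟨j, hjk, hj, -⟩ := exists_walk_eq_neg_one s (N := k) (by omega)
    have := (hbefore j (by omega)).1 (by omega)
    omega
  · rintro ⟨hbefore, hend⟩
    refine ⟨fun k hk => ?_, by omega⟩
    have := hbefore k hk
    omega

theorem isFirstReturn_cons_false_iff (s : Fin n → Bool) :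
    IsFirstReturn (Fin.cons false s : Fin (n + 1) → Bool) ↔
      IsFirstReturn (Fin.cons true (fun i => !s i) : Fin (n + 1) → Bool) := by
  simp only [IsFirstReturn, Fin.forall_iff, walk_cons, walk_not]
  refine and_congr_right fun _ => forall_congr' fun k => imp_congr_right fun _ => ?_
  simp only [Bool.false_eq_true, if_false, if_true]
  exact iff_congr (by omega) Iff.rfl

theorem firstReturnProb_zero : firstReturnProb 0 = 0 := by
  simp [firstReturnProb, pathProb, IsFirstReturn]

theorem firstReturnProb_succ (n : ℕ) : firstReturnProb (n + 1) = firstPassageProb n 1 := by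
  rw [firstReturnProb, pathProb_cons, Fintype.sum_bool,
    pathProb_congr isFirstReturn_cons_false_iff,
    pathProb_comp_involutive Bool.not_not (fun _ => rfl)
      (fun t => IsFirstReturn (Fin.cons true t : Fin (n + 1) → Bool)),
    pathProb_congr isFirstReturn_cons_true_iff]
  simp only [fairCoin, firstPassageProb]
  ring

theorem survivalProb_zero : survivalProb 0 = 1 := by
  simp [survivalProb, pathProb, AvoidsOriginUpTo]

theorem pathProb_avoidsOriginUpTo (n : ℕ) :
    pathProb fairCoin (AvoidsOriginUpTo n (n := n + 1)) = survivalProb n := by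
  rw [survivalProb, pathProb_append (A := AvoidsOriginUpTo n) (B := fun _ : Fin 1 → Bool => True)
    fun a b => ?_, pathProb_true, sum_fairCoin, one_pow, mul_one]
  simp only [AvoidsOriginUpTo, and_true]
  exact forall₂_congr fun k hk => by rw [walk_append_left a b hk]

theorem survivalProb_eq_survivalProb_succ_add (n : ℕ) :
    survivalProb n = survivalProb (n + 1) + firstReturnProb (n + 1) := by
  rw [← pathProb_avoidsOriginUpTo, pathProb_eq_and_add_and_not _ fun s => walk s (n + 1) = 0,
    add_comm, survivalProb, firstReturnProb]
  congr 1 <;> refine pathProb_congr fun s => ?_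
  · simp only [AvoidsOriginUpTo, Nat.forall_lt_succ_right]
  · simp only [IsFirstReturn, AvoidsOriginUpTo, Fin.forall_iff, Nat.forall_lt_succ_right,
      n.succ_pos, true_and, iff_true]
    exact and_congr_left fun _ => forall₂_congr fun k hk => by simp; omega

theorem sum_firstReturnProb_add_survivalProb (n : ℕ) :
    ∑ j ∈ range n, firstReturnProb (j + 1) + survivalProb n = 1 := by
  induction n with
  | zero => simp [survivalProb_zero]
  | succ n ih =>
    rw [survivalProb_eq_survivalProb_succ_add] at ih
    rw [Finset.sum_range_succ]
    linarith

theorem sum_range_firstPassageProb_one_le_one (N : ℕ) :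
    ∑ n ∈ range N, firstPassageProb n 1 ≤ 1 := by
  have h := sum_firstReturnProb_add_survivalProb N
  have : 0 ≤ survivalProb N := pathProb_nonneg fairCoin_nonneg _
  simp only [firstReturnProb_succ] at h
  linarith

end SimpleRandomWalk

section GeneratingFunctions

variable {v : ℝ}

theorem summable_mul_pow_of_nonneg_of_le_one {c : ℕ → ℝ} (h0 : ∀ n, 0 ≤ c n) (h1 : ∀ n, c n ≤ 1)
    (hv0 : 0 ≤ v) (hv1 : v < 1) : Summable fun n => c n * v ^ n :=
  (summable_geometric_of_lt_one hv0 hv1).of_nonneg_of_le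
    (fun n => mul_nonneg (h0 n) (pow_nonneg hv0 n))
    fun n => mul_le_of_le_one_left (pow_nonneg hv0 n) (h1 n)

theorem hasSum_antidiagonal_mul_pow {x y : ℕ → ℝ} {X Y : ℝ} (hx : ∀ n, 0 ≤ x n)
    (hy : ∀ n, 0 ≤ y n) (hv : 0 ≤ v) (hX : HasSum (fun n => x n * v ^ n) X)
    (hY : HasSum (fun n => y n * v ^ n) Y) :
    HasSum (fun n => (∑ kl ∈ antidiagonal n, x kl.1 * y kl.2) * v ^ n) (X * Y) := by
  have hXY : Summable fun kl : ℕ × ℕ => (x kl.1 * v ^ kl.1) * (y kl.2 * v ^ kl.2) :=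
    hX.summable.mul_of_nonneg hY.summable (fun n => mul_nonneg (hx n) (pow_nonneg hv n))
      fun n => mul_nonneg (hy n) (pow_nonneg hv n)
  have h := (summable_sum_mul_antidiagonal_of_summable_mul (f := fun n => x n * v ^ n)
    (g := fun n => y n * v ^ n) hXY).hasSum
  rw [← hX.summable.tsum_mul_tsum_eq_tsum_sum_antidiagonal hY.summable hXY, hX.tsum_eq,
    hY.tsum_eq] at h
  refine h.congr_fun fun n => ?_
  rw [Finset.sum_mul]
  refine Finset.sum_congr rfl fun kl hkl => ?_
  rw [← Finset.HasAntidiagonal.mem_antidiagonal.1 hkl, pow_add]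
  ring

theorem hasSum_firstPassageProb_one (hv0 : 0 ≤ v) (hv1 : v < 1) :
    HasSum (fun n => firstPassageProb n 1 * v ^ (n + 1)) (1 - √(1 - v ^ 2)) := by
  set g := fun n => firstPassageProb n 1 with hg
  have hg0 : ∀ n, 0 ≤ g n := fun n => pathProb_nonneg fairCoin_nonneg _
  have hg1 : ∀ n, g n ≤ 1 := fun n => pathProb_le_one fairCoin_nonneg sum_fairCoin _
  obtain ⟨G, hG⟩ := summable_mul_pow_of_nonneg_of_le_one hg0 hg1 hv0 hv1
  have hfix : G = v / 2 * (G * G + 1) := by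
    have hδ : HasSum (fun n => (if n = 0 then 1 else 0) * v ^ n) 1 := by
      convert hasSum_ite_eq 0 (1 : ℝ) using 2 with n
      split_ifs <;> simp [*]
    have hrec := ((hasSum_antidiagonal_mul_pow hg0 hg0 hv0 hG hG).add hδ).mul_left (v / 2)
    have hshift := (hasSum_nat_add_iff' 1).2 hG
    simp only [Finset.sum_range_one, hg, firstPassageProb_zero_one, zero_mul, sub_zero] at hshift
    refine hshift.unique (hrec.congr_fun fun n => ?_)
    rw [firstPassageProb_succ_one]
    ring
  have hG1 : G ≤ 1 := hG.tsum_eq ▸ Real.tsum_le_of_sum_range_le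
    (fun n => mul_nonneg (hg0 n) (pow_nonneg hv0 n)) fun N =>
      (Finset.sum_le_sum fun i _ => mul_le_of_le_one_right (hg0 i) (pow_le_one₀ hv0 hv1.le)).trans
        (sum_range_firstPassageProb_one_le_one N)
  -- `G ≤ 1` picks the smaller root of `v G² - 2 G + v = 0`
  have hsqrt : √(1 - v ^ 2) = 1 - v * G := by
    rw [Real.sqrt_eq_iff_mul_self_eq (by nlinarith) (by nlinarith)]
    linear_combination (2 * v) * hfix
  rw [hsqrt, sub_sub_cancel]
  exact (hG.mul_left v).congr_fun fun n => by ring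

theorem hasSum_firstReturnProb (hv0 : 0 ≤ v) (hv1 : v < 1) :
    HasSum (fun n => firstReturnProb n * v ^ n) (1 - √(1 - v ^ 2)) := by
  rw [← hasSum_nat_add_iff' 1]
  simpa [firstReturnProb_zero, firstReturnProb_succ] using hasSum_firstPassageProb_one hv0 hv1

theorem hasSum_survivalProb (hv0 : 0 ≤ v) (hv1 : v < 1) :
    HasSum (fun n => survivalProb n * v ^ n) (√(1 - v ^ 2) / (1 - v)) := by
  obtain ⟨Q, hQ⟩ := summable_mul_pow_of_nonneg_of_le_one (c := survivalProb)
    (fun n => pathProb_nonneg fairCoin_nonneg _)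
    (fun n => pathProb_le_one fairCoin_nonneg sum_fairCoin _) hv0 hv1
  have hF := (hasSum_nat_add_iff' 1).2 (hasSum_firstReturnProb hv0 hv1)
  have hshift := (hasSum_nat_add_iff' 1).2 hQ
  simp only [Finset.sum_range_one, firstReturnProb_zero, survivalProb_zero, sub_zero,
    pow_zero, mul_one] at hF hshift
  have hrec : HasSum (fun n => survivalProb (n + 1) * v ^ (n + 1)) (v * Q - (1 - √(1 - v ^ 2))) :=
    ((hQ.mul_left v).sub hF).congr_fun fun n => by
      rw [survivalProb_eq_survivalProb_succ_add n, pow_succ]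
      ring
  have hQv : Q - 1 = v * Q - (1 - √(1 - v ^ 2)) := hshift.unique hrec
  rwa [show √(1 - v ^ 2) / (1 - v) = Q by rw [div_eq_iff (by linarith)]; linarith]

end GeneratingFunctions

section ResetWalk

variable {t : ℕ}

theorem pos_succ_of_lt (ω : Fin t → Bool × Bool) {k : ℕ} (h : k < t) :
    pos ω (k + 1) = if (ω ⟨k, h⟩).1 then 0 else pos ω k + if (ω ⟨k, h⟩).2 then 1 else -1 := by
  simp [pos, h]

theorem pos_succ_of_le (ω : Fin t → Bool × Bool) {k : ℕ} (h : t ≤ k) : pos ω (k + 1) = pos ω k := by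
  simp [pos, Nat.not_lt.2 h]

theorem pos_eq_walk (ω : Fin t → Bool × Bool) {k : ℕ} (h : ∀ i : Fin t, i.1 < k → (ω i).1 = false) :
    pos ω k = walk (fun i => (ω i).2) k := by
  induction k with
  | zero => rfl
  | succ k ih =>
    have ih := ih fun i hi => h i (by omega)
    rcases lt_or_ge k t with hk | hk
    · rw [pos_succ_of_lt ω hk, walk_succ_of_lt _ hk, h ⟨k, hk⟩ (by simp), ih]
      rfl
    · rw [pos_succ_of_le ω hk, walk_succ_of_le _ hk, ih]

variable {j m : ℕ} (a : Fin j → Bool × Bool) (b : Fin m → Bool × Bool)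

theorem pos_append_left {k : ℕ} (h : k ≤ j) : pos (Fin.append a b) k = pos a k := by
  induction k with
  | zero => rfl
  | succ k ih =>
    rw [pos_succ_of_lt _ (by omega : k < j + m), pos_succ_of_lt a h, ih (by omega),
      ← Fin.castAdd_mk _ _ h, Fin.append_left]

theorem pos_append_right (h0 : pos a j = 0) (i : ℕ) : pos (Fin.append a b) (j + i) = pos b i := by
  induction i with
  | zero => rw [add_zero, pos_append_left a b le_rfl, h0]; rfl
  | succ i ih =>
    rcases lt_or_ge i m with h | h
    · rw [← add_assoc, pos_succ_of_lt _ (by omega : j + i < j + m), pos_succ_of_lt b h, ih,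
        ← Fin.natAdd_mk _ _ h, Fin.append_right]
    · rw [← add_assoc, pos_succ_of_le _ (by omega : j + m ≤ j + i), pos_succ_of_le b h, ih]

end ResetWalk

section ResetWalkLaw

variable {r : ℝ} {t j m : ℕ}

def resetLaw (r : ℝ) : Bool → ℝ := fun c => if c then r else 1 - r

noncomputable def stepLaw (r : ℝ) : Bool × Bool → ℝ := fun x => resetLaw r x.1 * fairCoin x.2

theorem stepLaw_nonneg (hr0 : 0 ≤ r) (hr1 : r ≤ 1) (x : Bool × Bool) : 0 ≤ stepLaw r x := by
  unfold stepLaw resetLaw fairCoin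
  split_ifs <;> linarith

theorem sum_stepLaw : ∑ x, stepLaw r x = 1 := by
  simp [stepLaw, resetLaw, fairCoin, Fintype.sum_prod_type]
  ring

theorem prob_eq_pathProb (E : (Fin t → Bool × Bool) → Prop) :
    prob r t E = pathProb (stepLaw r) E := by
  refine Finset.sum_congr rfl fun ω _ => ?_
  by_cases h : E ω <;> simp [h, wt, stepLaw, resetLaw, fairCoin]

def IsSpontaneousReturn (ω : Fin t → Bool × Bool) (k : Fin t) : Prop :=
  (ω k).1 = false ∧ pos ω (k.1 + 1) = 0

def IsFirstResetAt (j : ℕ) (ω : Fin t → Bool × Bool) : Prop :=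
  ∃ h : j < t, (ω ⟨j, h⟩).1 = true ∧ ∀ i : Fin t, i.1 < j → (ω i).1 = false

/-- The law of `T^{(r)}`. The guard `0 < t` is needed because `FirstReturnAtEnd` holds vacuously
for `t = 0`. -/
noncomputable def firstReturnLaw (r : ℝ) (t : ℕ) : ℝ :=
  prob r t fun ω => 0 < t ∧ FirstReturnAtEnd ω

theorem firstReturnLaw_zero : firstReturnLaw r 0 = 0 := by
  simp [firstReturnLaw, prob, expect]

theorem firstReturnLaw_nonneg (hr0 : 0 ≤ r) (hr1 : r ≤ 1) (t : ℕ) : 0 ≤ firstReturnLaw r t := by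
  rw [firstReturnLaw, prob_eq_pathProb]
  exact pathProb_nonneg (stepLaw_nonneg hr0 hr1) _

theorem firstReturnLaw_le_one (hr0 : 0 ≤ r) (hr1 : r ≤ 1) (t : ℕ) : firstReturnLaw r t ≤ 1 := by
  rw [firstReturnLaw, prob_eq_pathProb]
  exact pathProb_le_one (stepLaw_nonneg hr0 hr1) sum_stepLaw _

theorem exists_isFirstResetAt {ω : Fin t → Bool × Bool} (h : ∃ k, (ω k).1 = true) :
    ∃ j < t, IsFirstResetAt j ω := by
  have hex : ∃ j, ∃ h : j < t, (ω ⟨j, h⟩).1 = true := let ⟨k, hk⟩ := h; ⟨k.1, k.2, hk⟩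
  obtain ⟨hlt, hj⟩ := Nat.find_spec hex
  refine ⟨Nat.find hex, hlt, hlt, hj, fun i hi => ?_⟩
  simpa using Nat.find_min hex hi

theorem IsFirstResetAt.unique {ω : Fin t → Bool × Bool} {i j : ℕ} (hi : IsFirstResetAt i ω)
    (hj : IsFirstResetAt j ω) : i = j := by
  obtain ⟨hit, hir, hibefore⟩ := hi
  obtain ⟨hjt, hjr, hjbefore⟩ := hj
  by_contra hne
  rcases Nat.lt_or_gt_of_ne hne with h | h
  · simp [hjbefore ⟨i, hit⟩ h] at hir
  · simp [hibefore ⟨j, hjt⟩ h] at hjr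

theorem pathProb_firstReturn_noReset :
    pathProb (stepLaw r) (fun ω : Fin t → Bool × Bool =>
        (0 < t ∧ FirstReturnAtEnd ω) ∧ ∀ k, (ω k).1 = false) =
      (1 - r) ^ t * firstReturnProb t := by
  rw [pathProb_prod (p := stepLaw r) (resetLaw r) fairCoin (fun _ => rfl)
    (A := fun c => c = fun _ => false)
    (B := IsFirstReturn) fun c s => ?_, pathProb_singleton, firstReturnProb]
  · simp [resetLaw]
  constructor
  · rintro ⟨⟨ht, hfr⟩, hc⟩
    simp only at hc
    refine ⟨funext hc, ht, fun k => ?_⟩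
    rw [← pos_eq_walk (fun k => (c k, s k)) fun i _ => hc i]
    simpa [hc k] using hfr k
  · rintro ⟨rfl, ht, hfr⟩
    refine ⟨⟨ht, fun k => ?_⟩, fun _ => rfl⟩
    rw [pos_eq_walk _ fun _ _ => rfl]
    simpa using hfr k

theorem isFirstResetAt_append_iff (a : Fin (j + 1) → Bool × Bool) (b : Fin m → Bool × Bool) :
    IsFirstResetAt j (Fin.append a b) ↔ IsFirstResetAt j a := by
  have happ : ∀ (i : ℕ) (hi : i < j + 1), Fin.append a b ⟨i, by omega⟩ = a ⟨i, hi⟩ :=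
    fun i hi => by rw [← Fin.castAdd_mk m i hi, Fin.append_left]
  constructor
  · rintro ⟨hlt, hj, hbefore⟩
    refine ⟨j.lt_add_one, by rwa [happ] at hj, fun i hi => ?_⟩
    have := hbefore ⟨i, by omega⟩ hi
    rwa [happ i i.2] at this
  · rintro ⟨hlt, hj, hbefore⟩
    refine ⟨by omega, by rwa [happ], fun i hi => ?_⟩
    rw [happ i (by omega)]
    exact hbefore _ hi

theorem firstReturnAtEnd_append_iff {a : Fin (j + 1) → Bool × Bool} (b : Fin m → Bool × Bool)
    (ha : (a (Fin.last j)).1 = true) :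
    FirstReturnAtEnd (Fin.append a b) ↔
      (∀ i, ¬ IsSpontaneousReturn a i) ∧ 0 < m ∧ FirstReturnAtEnd b := by
  have h0 : pos a (j + 1) = 0 := by
    rw [pos_succ_of_lt a (Nat.lt_succ_self j)]
    simp [show (⟨j, _⟩ : Fin (j + 1)) = Fin.last j from rfl, ha]
  have hlast : ¬ IsSpontaneousReturn a (Fin.last j) := by simp [IsSpontaneousReturn, ha]
  rw [FirstReturnAtEnd, Fin.forall_fin_add, ← and_assoc]
  refine and_congr ?_ (forall_congr' fun i => ?_)
  · have hleft (i : Fin (j + 1)) : ((a i).1 = false ∧ pos (Fin.append a b) (i + 1) = 0) ↔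
        IsSpontaneousReturn a i := by
      rw [pos_append_left a b (by omega : i.1 + 1 ≤ j + 1)]
      rfl
    simp only [Fin.append_left, Fin.val_castAdd, hleft]
    constructor
    · intro h
      have hm : 0 < m := by
        by_contra hm
        exact hlast ((h (Fin.last j)).2 (by simp; omega))
      refine ⟨fun i hi => ?_, hm⟩
      have := (h i).1 hi
      omega
    · rintro ⟨h, hm⟩ i
      exact iff_of_false (h i) (by omega)
  · rw [Fin.append_right, Fin.val_natAdd, show j + 1 + i.1 + 1 = j + 1 + (i.1 + 1) by omega,
      pos_append_right a b h0]
    exact iff_congr Iff.rfl (by omega)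

theorem isFirstResetAt_iff (c s : Fin (j + 1) → Bool) :
    IsFirstResetAt j (fun k => (c k, s k)) ↔ c = fun k => decide (k.1 = j) := by
  constructor
  · rintro ⟨hlt, hj, hbefore⟩
    funext k
    rcases (Nat.lt_succ_iff.1 k.2).lt_or_eq with hk | hk
    · simpa [hk.ne] using hbefore k hk
    · simpa [hk, show k = ⟨j, hlt⟩ from Fin.ext hk] using hj
  · rintro rfl
    exact ⟨j.lt_add_one, by simp, fun i hi => by simp [hi.ne]⟩

theorem pathProb_firstResetAt_noReturn (j : ℕ) :
    pathProb (stepLaw r) (fun a : Fin (j + 1) → Bool × Bool =>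
        IsFirstResetAt j a ∧ ∀ i, ¬ IsSpontaneousReturn a i) =
      r * (1 - r) ^ j * survivalProb j := by
  rw [pathProb_prod (p := stepLaw r) (resetLaw r) fairCoin (fun _ => rfl)
    (A := fun c => c = fun k => decide (k.1 = j)) (B := AvoidsOriginUpTo j) fun c s => ?_,
    pathProb_singleton, pathProb_avoidsOriginUpTo]
  · simp [Fin.prod_univ_castSucc, resetLaw, Nat.ne_of_lt, mul_comm]
  rw [isFirstResetAt_iff]
  refine and_congr_right fun hc => ?_
  subst hc
  rw [Fin.forall_iff_castSucc, AvoidsOriginUpTo]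
  simp only [IsSpontaneousReturn, Fin.val_last, decide_true, Bool.true_eq_false, false_and,
    not_false_eq_true, true_and, Fin.val_castSucc]
  rw [Fin.forall_iff]
  refine forall₂_congr fun k hk => ?_
  rw [pos_eq_walk _ fun i hi => by simp; omega]
  simp [hk.ne]

theorem pathProb_firstReturn_firstResetAt (ht : t = j + 1 + m) :
    pathProb (stepLaw r) (fun ω : Fin t → Bool × Bool =>
        (0 < t ∧ FirstReturnAtEnd ω) ∧ IsFirstResetAt j ω) =
      r * (1 - r) ^ j * survivalProb j * firstReturnLaw r m := by
  subst ht
  rw [firstReturnLaw, prob_eq_pathProb, ← pathProb_firstResetAt_noReturn]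
  refine pathProb_append fun a b => ?_
  rw [isFirstResetAt_append_iff]
  constructor
  · rintro ⟨⟨-, hfr⟩, hreset⟩
    rw [firstReturnAtEnd_append_iff b hreset.snd.1] at hfr
    exact ⟨⟨hreset, hfr.1⟩, hfr.2⟩
  · rintro ⟨⟨hreset, hno⟩, hb⟩
    exact ⟨⟨by omega, (firstReturnAtEnd_append_iff b hreset.snd.1).2 ⟨hno, hb⟩⟩, hreset⟩

/-- Renewal equation: either there is no reset up to time `n + 1`, or the walk survives without
spontaneous return until its first reset and then starts afresh. -/
theorem firstReturnLaw_succ (n : ℕ) :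
    firstReturnLaw r (n + 1) = (1 - r) ^ (n + 1) * firstReturnProb (n + 1) +
      r * ∑ kl ∈ antidiagonal n, (1 - r) ^ kl.1 * survivalProb kl.1 * firstReturnLaw r kl.2 := by
  rw [firstReturnLaw, prob_eq_pathProb, pathProb_eq_and_add_and_not _ fun ω => ∀ k, (ω k).1 = false,
    pathProb_firstReturn_noReset, pathProb_eq_sum_range (n + 1) IsFirstResetAt
      (fun ω hω => exists_isFirstResetAt (by simpa using hω.2)) (fun ω i j hi hj => hi.unique hj),
    Finset.Nat.sum_antidiagonal_eq_sum_range_succ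
      (fun k l => (1 - r) ^ k * survivalProb k * firstReturnLaw r l), Finset.mul_sum]
  congr 1
  refine Finset.sum_congr rfl fun j hj => ?_
  rw [pathProb_congr fun ω => ?_, pathProb_firstReturn_firstResetAt (j := j) (m := n - j)
    (by have := Finset.mem_range.1 hj; omega)]
  · ring
  refine ⟨fun h => ⟨h.1.1, h.2⟩, fun h => ⟨⟨h.1, fun hno => ?_⟩, h.2⟩⟩
  obtain ⟨hlt, hreset, -⟩ := h.2
  simp [hno] at hreset

end ResetWalkLaw

theorem hasSum_firstReturnLaw {r w : ℝ} (hr0 : 0 ≤ r) (hr1 : r ≤ 1) (hw0 : 0 ≤ w) (hw1 : w < 1) :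
    HasSum (fun t => firstReturnLaw r t * w ^ t)
      ((1 - (1 - r) * w) * (1 - √(1 - ((1 - r) * w) ^ 2)) /
        (1 - w + r * w * (1 - √(1 - ((1 - r) * w) ^ 2)))) := by
  set v := (1 - r) * w with hv
  set S := √(1 - v ^ 2)
  have hv0 : 0 ≤ v := mul_nonneg (by linarith) hw0
  have hv1 : v < 1 := (mul_le_of_le_one_left hw0 (by linarith)).trans_lt hw1
  have hS1 : S ≤ 1 := Real.sqrt_le_one.2 (by nlinarith)
  have hF : HasSum (fun n => (1 - r) ^ n * firstReturnProb n * w ^ n) (1 - S) :=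
    (hasSum_firstReturnProb hv0 hv1).congr_fun fun n => by rw [hv, mul_pow]; ring
  have hK : HasSum (fun n => (1 - r) ^ n * survivalProb n * w ^ n) (S / (1 - v)) :=
    (hasSum_survivalProb hv0 hv1).congr_fun fun n => by rw [hv, mul_pow]; ring
  obtain ⟨A, hA⟩ := summable_mul_pow_of_nonneg_of_le_one (firstReturnLaw_nonneg hr0 hr1)
    (firstReturnLaw_le_one hr0 hr1) hw0 hw1
  have hrenewal : A = 1 - S + r * w * (S / (1 - v) * A) := by
    have hA' := (hasSum_nat_add_iff' 1).2 hA
    have hF' := (hasSum_nat_add_iff' 1).2 hF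
    simp only [Finset.sum_range_one, firstReturnLaw_zero, firstReturnProb_zero, zero_mul, mul_zero,
      sub_zero] at hA' hF'
    have hconv := (hasSum_antidiagonal_mul_pow (x := fun n => (1 - r) ^ n * survivalProb n)
      (fun n => mul_nonneg (pow_nonneg (by linarith) n) (pathProb_nonneg fairCoin_nonneg _))
      (firstReturnLaw_nonneg hr0 hr1) hw0 hK hA).mul_left (r * w)
    refine hA'.unique ((hF'.add hconv).congr_fun fun n => ?_)
    rw [firstReturnLaw_succ]
    ring
  have hden : 0 < 1 - w + r * w * (1 - S) := by nlinarith [mul_nonneg hr0 hw0]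
  have h1v : 1 - v ≠ 0 := by linarith
  convert hA using 1
  rw [div_eq_iff hden.ne']
  field_simp at hrenewal
  linear_combination (-1 : ℝ) * hrenewal - A * hv

end ResetPolya

/-- The generating function of the distribution of the first spontaneous return time
`T^{(r)}` of the reset Pólya walk is the 'dressed' generating function `ρ̃^{(r)}`. -/
theorem statement6 (r : ℝ) (hr : r ∈ Set.Ioo (0 : ℝ) 1)
    (w : ℝ) (hw : w ∈ Set.Ioo (0 : ℝ) 1)
    (wb : ℝ) (hwb : wb = (1 - r) * w)
    (ρ : ℝ → ℝ) (hρ : ∀ v, ρ v = 1 - Real.sqrt (1 - v ^ 2)) :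
    HasSum (fun τ : ℕ => w ^ (τ + 1) * prob r (τ + 1) FirstReturnAtEnd)
      ((1 - wb) * ρ wb / (1 - w + r * w * ρ wb)) := by
  have h := (hasSum_nat_add_iff' 1).2 (hasSum_firstReturnLaw hr.1.le hr.2.le hw.1.le hw.2)
  simp only [Finset.sum_range_one, firstReturnLaw_zero, zero_mul, sub_zero] at h
  rw [hwb, hρ]
  refine h.congr_fun fun τ => ?_
  simp [firstReturnLaw, mul_comm]
end

section
/- For every r ∈ (0,1), the function D(w) = 1 − w + r·w·(1 − √(1 − (1−r)²w²)) has a unique zero w₀ in the open interval (1, 1/(1−r)), and this w₀ satisfies the cubic equation r²(1−r)·w₀³ + r²·w₀² + (1−r)·w₀ − 1 = 0. -/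
/-!
On `0 < w < 1/(1-r)` put `q = (1-r)w ∈ (0,1)`. Then `D w = 0` says `r w √(1-q²) = 1-q`, an
equation between nonnegative numbers, so it may be squared; cancelling the positive factor
`1-q` from `r²w²(1-q)(1+q) = (1-q)²` leaves the cubic `r²w²(1+q) = 1-q`. That cubic is strictly
increasing for `w ≥ 0`, negative at `w = 1` and positive at `w = 1/(1-r)`, hence has exactly one
root in between.
-/

open Set

def resetCubic (r w : ℝ) : ℝ :=
  r ^ 2 * (1 - r) * w ^ 3 + r ^ 2 * w ^ 2 + (1 - r) * w - 1

lemma resetCubic_strictMonoOn {r : ℝ} (hr : r < 1) : StrictMonoOn (resetCubic r) (Ici 0) := by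
  intro u (hu : 0 ≤ u) v (hv : 0 ≤ v) huv
  have hslope : 0 < r ^ 2 * (1 - r) * (u ^ 2 + u * v + v ^ 2) + r ^ 2 * (u + v) + (1 - r) := by
    have : 0 ≤ r ^ 2 * (1 - r) * (u ^ 2 + u * v + v ^ 2) := by
      have : 0 ≤ 1 - r := by linarith
      positivity
    nlinarith [sq_nonneg r]
  have hdiff : resetCubic r v - resetCubic r u =
      (v - u) * (r ^ 2 * (1 - r) * (u ^ 2 + u * v + v ^ 2) + r ^ 2 * (u + v) + (1 - r)) := by
    unfold resetCubic; ring
  nlinarith [mul_pos (sub_pos.mpr huv) hslope]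

lemma resetCubic_one (r : ℝ) : resetCubic r 1 = -r * (1 - r) ^ 2 := by
  unfold resetCubic; ring

lemma resetCubic_inv_one_sub {r : ℝ} (hr : r ≠ 1) :
    resetCubic r (1 / (1 - r)) = 2 * r ^ 2 / (1 - r) ^ 2 := by
  have : 1 - r ≠ 0 := sub_ne_zero.mpr hr.symm
  unfold resetCubic; field_simp; ring

lemma exists_resetCubic_eq_zero {r : ℝ} (hr0 : 0 < r) (hr1 : r < 1) :
    ∃ w ∈ Ioo 1 (1 / (1 - r)), resetCubic r w = 0 := by
  have h1r : 0 < 1 - r := by linarith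
  have hle : (1 : ℝ) ≤ 1 / (1 - r) := by rw [le_div_iff₀ h1r]; linarith
  have hcont : ContinuousOn (resetCubic r) (Icc 1 (1 / (1 - r))) := by
    unfold resetCubic; fun_prop
  refine intermediate_value_Ioo hle hcont ⟨?_, ?_⟩
  · rw [resetCubic_one]; have := mul_pos hr0 (pow_pos h1r 2); linarith
  · rw [resetCubic_inv_one_sub hr1.ne]; positivity

lemma denom_eq_zero_iff_resetCubic_eq_zero {r w : ℝ} (hr0 : 0 ≤ r) (hr1 : r ≤ 1) (hw : 0 ≤ w)
    (hrw : (1 - r) * w < 1) :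
    1 - w + r * w * (1 - √(1 - (1 - r) ^ 2 * w ^ 2)) = 0 ↔ resetCubic r w = 0 := by
  rw [← mul_pow]
  set q := (1 - r) * w
  have hq0 : 0 ≤ q := mul_nonneg (by linarith) hw
  have hs : √(1 - q ^ 2) ^ 2 = 1 - q ^ 2 := Real.sq_sqrt (by nlinarith)
  calc 1 - w + r * w * (1 - √(1 - q ^ 2)) = 0
      ↔ r * w * √(1 - q ^ 2) = 1 - q := by constructor <;> intro h <;> linarith
    _ ↔ (r * w * √(1 - q ^ 2)) ^ 2 = (1 - q) ^ 2 := (sq_eq_sq₀ (by positivity) (by linarith)).symm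
    _ ↔ (1 - q) * (r ^ 2 * w ^ 2 * (1 + q)) = (1 - q) * (1 - q) := by
      rw [mul_pow, mul_pow, hs, sq (1 - q)]; constructor <;> intro h <;> linarith
    _ ↔ r ^ 2 * w ^ 2 * (1 + q) = 1 - q := mul_right_inj' (by linarith)
    _ ↔ resetCubic r w = 0 := by
      unfold resetCubic; constructor <;> intro h <;> linear_combination h

/-- The denominator `D(w) = 1 − w + r·w·(1 − √(1 − (1−r)²w²))` of the 'dressed'
generating function of the reset Pólya walk has a unique zero `w₀` in
`(1, 1/(1−r))`, and this zero satisfies the cubic equation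
`r²(1−r)w₀³ + r²w₀² + (1−r)w₀ − 1 = 0`. -/
theorem statement10 (r : ℝ) (hr : r ∈ Set.Ioo (0 : ℝ) 1)
    (D : ℝ → ℝ)
    (hD : ∀ w, D w = 1 - w + r * w * (1 - Real.sqrt (1 - (1 - r) ^ 2 * w ^ 2))) :
    (∃! w₀ : ℝ, w₀ ∈ Set.Ioo (1 : ℝ) (1 / (1 - r)) ∧ D w₀ = 0) ∧
    ∀ w₀ ∈ Set.Ioo (1 : ℝ) (1 / (1 - r)), D w₀ = 0 →
      r ^ 2 * (1 - r) * w₀ ^ 3 + r ^ 2 * w₀ ^ 2 + (1 - r) * w₀ - 1 = 0 := by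
  obtain ⟨hr0, hr1⟩ := hr
  have hD_iff : ∀ w ∈ Ioo 1 (1 / (1 - r)), D w = 0 ↔ resetCubic r w = 0 := by
    rintro w ⟨hw1, hw2⟩
    have hrw : w * (1 - r) < 1 := (lt_div_iff₀ (by linarith)).mp hw2
    rw [hD]
    exact denom_eq_zero_iff_resetCubic_eq_zero hr0.le hr1.le (by linarith) (by linarith)
  obtain ⟨w₀, hw₀, hroot⟩ := exists_resetCubic_eq_zero hr0 hr1
  refine ⟨⟨w₀, ⟨hw₀, (hD_iff w₀ hw₀).mpr hroot⟩, ?_⟩, fun w hw hDw => (hD_iff w hw).mp hDw⟩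
  rintro w ⟨hw, hDw⟩
  exact (resetCubic_strictMonoOn hr1).injOn (mem_Ici.mpr (by linarith [hw.1]))
    (mem_Ici.mpr (by linarith [hw₀.1])) (((hD_iff w hw).mp hDw).trans hroot.symm)
end

section
/- For every r ∈ (0,1) and every integer ℓ ≥ 1, the ℓ-th derivative at μ = 0 of the function μ ↦ ln(1 − r + r·e^μ) (the cumulant generating function of a Bernoulli(r) random variable) equals Σ_{k=1}^{ℓ} (−1)^{k−1} · (k−1)! · S(ℓ,k) · r^k, where S(ℓ,k) denotes the Stirling numbers of the second kind. -/
/-!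
The derivative of `μ ↦ log (1 - r + r eᵘ)` is `p = r eᵘ / (1 - r + r eᵘ)`, which solves the
logistic equation `p' = p - p²`. Hence the `n`-th derivative of `p` is a polynomial in `p`;
differentiating `p ^ (k + 1)` shows that its coefficients, up to the factor `(-1)ᵏ k!`, obey the
Stirling recurrence `S(n+1, k+1) = (k+1) S(n, k+1) + S(n, k)`. At `μ = 0` we have `p = r`.
-/

/-- Stirling numbers of the second kind: `stirling2 n k` is the number of
partitions of an `n`-element set into `k` nonempty blocks. -/
def stirling2 : ℕ → ℕ → ℕ
  | 0, 0 => 1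
  | 0, _ + 1 => 0
  | _ + 1, 0 => 0
  | n + 1, k + 1 => (k + 1) * stirling2 n (k + 1) + stirling2 n k

open Finset Nat Real Topology

lemma stirling2_eq_stirlingSecond : stirling2 = stirlingSecond := by
  funext n k
  induction n generalizing k with
  | zero => cases k <;> rfl
  | succ n ih =>
    cases k with
    | zero => rfl
    | succ k => simp only [stirling2, stirlingSecond_succ_succ, ih]

noncomputable def logisticDerivPoly (n : ℕ) (y : ℝ) : ℝ :=
  ∑ k ∈ range (n + 1), (-1) ^ k * (k ! : ℝ) * stirlingSecond (n + 1) (k + 1) * y ^ (k + 1)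

lemma logisticDerivPoly_zero (y : ℝ) : logisticDerivPoly 0 y = y := by
  simp [logisticDerivPoly, stirlingSecond_one_right]

lemma logisticDerivPoly_succ (n : ℕ) (y : ℝ) :
    logisticDerivPoly (n + 1) y = ∑ k ∈ range (n + 1),
      (-1) ^ k * (k ! : ℝ) * stirlingSecond (n + 1) (k + 1) *
        ((k + 1 : ℕ) * y ^ k * (y - y ^ 2)) := by
  set b : ℕ → ℝ := fun j =>
    (-1) ^ j * ((j + 1)! : ℝ) * stirlingSecond (n + 1) (j + 1) * y ^ (j + 1)
  -- The Stirling recurrence splits each term into one on the right and a telescoping difference.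
  have hterm : ∀ k ∈ range (n + 1),
      (-1) ^ (k + 1) * ((k + 1)! : ℝ) * stirlingSecond (n + 2) (k + 2) * y ^ (k + 2) =
        (-1) ^ k * (k ! : ℝ) * stirlingSecond (n + 1) (k + 1) *
          ((k + 1 : ℕ) * y ^ k * (y - y ^ 2)) + (b (k + 1) - b k) := by
    intro k _
    simp only [b, stirlingSecond_succ_succ (n + 1) (k + 1), factorial_succ]
    push_cast
    ring
  have hb₀ : b 0 = y := by simp [b, stirlingSecond_one_right]
  have hb_top : b (n + 1) = 0 := by simp [b, stirlingSecond_eq_zero_of_lt (lt_add_one (n + 1))]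
  rw [logisticDerivPoly, sum_range_succ', sum_congr rfl hterm, sum_add_distrib, sum_range_sub,
    hb₀, hb_top]
  simp [stirlingSecond_one_right]

lemma HasDerivAt.logisticDerivPoly_comp {p : ℝ → ℝ} {x : ℝ}
    (hp : HasDerivAt p (p x - p x ^ 2) x) (n : ℕ) :
    HasDerivAt (fun t => logisticDerivPoly n (p t)) (logisticDerivPoly (n + 1) (p x)) x := by
  rw [logisticDerivPoly_succ]
  exact HasDerivAt.fun_sum fun k _ => (hp.pow (k + 1)).const_mul _

lemma iteratedDeriv_eq_logisticDerivPoly {p : ℝ → ℝ} {U : Set ℝ} (hU : IsOpen U)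
    (hp : ∀ x ∈ U, HasDerivAt p (p x - p x ^ 2) x) (n : ℕ) :
    ∀ x ∈ U, iteratedDeriv n p x = logisticDerivPoly n (p x) := by
  induction n with
  | zero => intro x _; simp [logisticDerivPoly_zero]
  | succ n ih =>
    intro x hx
    have heq : iteratedDeriv n p =ᶠ[𝓝 x] fun t => logisticDerivPoly n (p t) :=
      Filter.eventually_of_mem (hU.mem_nhds hx) ih
    rw [iteratedDeriv_succ]
    exact (((hp x hx).logisticDerivPoly_comp n).congr_of_eventuallyEq heq).deriv

lemma hasDerivAt_log_one_sub_add_mul_exp {r μ : ℝ} (h : 1 - r + r * exp μ ≠ 0) :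
    HasDerivAt (fun μ => log (1 - r + r * exp μ)) (r * exp μ / (1 - r + r * exp μ)) μ :=
  (((hasDerivAt_exp μ).const_mul r).const_add (1 - r)).log h

lemma hasDerivAt_mul_exp_div_one_sub_add_mul_exp {r μ : ℝ} (h : 1 - r + r * exp μ ≠ 0) :
    HasDerivAt (fun μ => r * exp μ / (1 - r + r * exp μ))
      (r * exp μ / (1 - r + r * exp μ) - (r * exp μ / (1 - r + r * exp μ)) ^ 2) μ := by
  have hnum := (hasDerivAt_exp μ).const_mul r
  refine (hnum.fun_div (hnum.const_add (1 - r)) h).congr_deriv ?_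
  field_simp

lemma iteratedDeriv_succ_eq_logisticDerivPoly {K p : ℝ → ℝ} {U : Set ℝ} (hU : IsOpen U)
    (hK : ∀ x ∈ U, HasDerivAt K (p x) x) (hp : ∀ x ∈ U, HasDerivAt p (p x - p x ^ 2) x)
    (n : ℕ) : ∀ x ∈ U, iteratedDeriv (n + 1) K x = logisticDerivPoly n (p x) := by
  have hderiv : ∀ x ∈ U, deriv K x = p x := fun x hx => (hK x hx).deriv
  have hK' : ∀ x ∈ U, HasDerivAt (deriv K) (deriv K x - deriv K x ^ 2) x := fun x hx => by
    rw [hderiv x hx]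
    exact (hp x hx).congr_of_eventuallyEq (Filter.eventually_of_mem (hU.mem_nhds hx) hderiv)
  intro x hx
  rw [iteratedDeriv_succ', iteratedDeriv_eq_logisticDerivPoly hU hK' n x hx, hderiv x hx]

theorem statement15_general (r : ℝ) (ℓ : ℕ) :
    iteratedDeriv ℓ (fun μ : ℝ => Real.log (1 - r + r * Real.exp μ)) 0 =
      ∑ k ∈ Finset.Icc 1 ℓ,
        (-1 : ℝ) ^ (k - 1) * (Nat.factorial (k - 1) : ℝ) * (stirling2 ℓ k : ℝ) * r ^ k := by
  cases ℓ with
  | zero => simp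
  | succ n =>
    set U := {μ : ℝ | 1 - r + r * exp μ ≠ 0}
    have hU : IsOpen U := isOpen_ne_fun (by fun_prop) continuous_const
    have h0 : (0 : ℝ) ∈ U := by simp [U]
    rw [iteratedDeriv_succ_eq_logisticDerivPoly hU
        (fun _ hμ => hasDerivAt_log_one_sub_add_mul_exp hμ)
        (fun _ hμ => hasDerivAt_mul_exp_div_one_sub_add_mul_exp hμ) n 0 h0,
      logisticDerivPoly, stirling2_eq_stirlingSecond, ← Ico_add_one_right_eq_Icc,
      sum_Ico_eq_sum_range]
    simp [add_comm 1]

/-- The `ℓ`-th cumulant of a Bernoulli(`r`) random variable, i.e. the `ℓ`-th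
derivative at `μ = 0` of `μ ↦ ln(1 − r + r·e^μ)`, equals
`Σ_{k=1}^{ℓ} (−1)^{k−1}·(k−1)!·S(ℓ,k)·r^k`. -/
theorem statement15 (r : ℝ) (hr : r ∈ Set.Ioo (0 : ℝ) 1) (ℓ : ℕ) (hℓ : 1 ≤ ℓ) :
    iteratedDeriv ℓ (fun μ : ℝ => Real.log (1 - r + r * Real.exp μ)) 0 =
      ∑ k ∈ Finset.Icc 1 ℓ,
        (-1 : ℝ) ^ (k - 1) * (Nat.factorial (k - 1) : ℝ) * (stirling2 ℓ k : ℝ) * r ^ k :=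
  statement15_general r ℓ
end

section
/- For every r ∈ (0,1) and every even time t = 2m with m ≥ 0, the probability that the reset Pólya walk experiences no resetting event and exactly m spontaneous returns to the origin up to time t equals (1−r)^{2m} · 2^{−m}; that is, P(N•_{2m} = 0 and N×_{2m} = m) = (1−r)^{2m}·2^{−m}. -/
open Finset Filter

/-!
Without resets the position at time `n` has the parity of `n`, so spontaneous returns can only
happen at the `m` even times `2, 4, …, 2m`. Hence `N•_{2m} = 0 ∧ N×_{2m} = m` says exactly that
no reset occurs and the walk is back at the origin at every even time, i.e. each step `2j+1`
undoes step `2j`. These outcomes are parametrised by the `m` free steps `2j`, and each has weight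
`((1 - r)/2)^{2m}`, so the probability is `2^m ((1 - r)/2)^{2m}`.
-/

namespace ResetPolya

theorem prob_eq_sum_filter (r : ℝ) (t : ℕ) (E : (Fin t → Bool × Bool) → Prop)
    [DecidablePred E] : prob r t E = ∑ ω ∈ univ.filter E, wt r ω := by
  simp only [prob, expect, mul_ite, mul_one, mul_zero, sum_filter]

section NoReset

variable {t : ℕ} (ω : Fin t → Bool × Bool)

theorem ndot_eq_zero_iff : Ndot ω = 0 ↔ ∀ k, (ω k).1 = false := by
  simp [Ndot]

theorem wt_of_forall_not_reset (r : ℝ) (hω : ∀ k, (ω k).1 = false) :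
    wt r ω = ((1 - r) / 2) ^ t := by
  simp [wt, hω, div_eq_mul_inv]

theorem pos_succ_of_not_reset (k : Fin t) (hk : (ω k).1 = false) :
    pos ω (k + 1) = pos ω k + if (ω k).2 then 1 else -1 := by
  simp [pos, hk]

theorem two_dvd_pos_sub_of_forall_not_reset (hω : ∀ k, (ω k).1 = false) :
    ∀ n ≤ t, (2 : ℤ) ∣ pos ω n - n
  | 0, _ => by simp [pos]
  | n + 1, hn => by
    have ih := two_dvd_pos_sub_of_forall_not_reset hω n (by omega)
    have hstep := pos_succ_of_not_reset ω ⟨n, hn⟩ (hω _)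
    dsimp only at hstep
    rw [hstep]
    split <;> omega

end NoReset

section EvenHorizon

variable {m : ℕ}

def evenIdx (j : Fin m) : Fin (2 * m) := ⟨2 * j, by omega⟩

def oddIdx (j : Fin m) : Fin (2 * m) := ⟨2 * j + 1, by omega⟩

@[simp] theorem val_evenIdx (j : Fin m) : (evenIdx j : ℕ) = 2 * j := rfl

@[simp] theorem val_oddIdx (j : Fin m) : (oddIdx j : ℕ) = 2 * j + 1 := rfl

theorem oddIdx_injective : Function.Injective (oddIdx (m := m)) := by
  intro i j h
  simpa [oddIdx, Fin.ext_iff] using h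

theorem eq_evenIdx_or_eq_oddIdx (k : Fin (2 * m)) :
    ∃ j : Fin m, k = evenIdx j ∨ k = oddIdx j :=
  ⟨⟨k / 2, by omega⟩, by simp only [evenIdx, oddIdx, Fin.ext_iff]; omega⟩

variable (ω : Fin (2 * m) → Bool × Bool)

theorem filter_returns_eq_map_oddIdx (hω : ∀ k, (ω k).1 = false) :
    univ.filter (fun k => (ω k).1 = false ∧ pos ω (k + 1) = 0) =
      (univ.filter fun j : Fin m => pos ω (2 * j + 2) = 0).map ⟨oddIdx, oddIdx_injective⟩ := by
  ext k
  simp only [mem_filter, mem_univ, true_and, Finset.mem_map, Function.Embedding.coeFn_mk, hω]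
  obtain ⟨j, rfl | rfl⟩ := eq_evenIdx_or_eq_oddIdx k
  · have hodd := two_dvd_pos_sub_of_forall_not_reset ω hω (2 * j + 1) (by omega)
    refine ⟨fun h => ?_, fun ⟨i, _, hij⟩ => ?_⟩
    · rw [val_evenIdx] at h
      rw [h] at hodd
      omega
    · simp only [evenIdx, oddIdx, Fin.ext_iff] at hij
      omega
  · exact ⟨fun h => ⟨j, h, rfl⟩, fun ⟨i, hi, hij⟩ => oddIdx_injective hij ▸ hi⟩

theorem ncross_eq_iff_forall_pos_even_eq_zero (hω : ∀ k, (ω k).1 = false) :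
    Ncross ω = m ↔ ∀ j : Fin m, pos ω (2 * j + 2) = 0 := by
  rw [Ncross, filter_returns_eq_map_oddIdx ω hω, card_map]
  simpa using card_filter_eq_iff (s := univ) (p := fun j : Fin m => pos ω (2 * j + 2) = 0)

theorem pos_even_succ (hω : ∀ k, (ω k).1 = false) (j : Fin m) :
    pos ω (2 * j + 2) =
      pos ω (2 * j) + (if (ω (evenIdx j)).2 then 1 else -1) +
        if (ω (oddIdx j)).2 then 1 else -1 := by
  have heven := pos_succ_of_not_reset ω (evenIdx j) (hω _)
  have hodd := pos_succ_of_not_reset ω (oddIdx j) (hω _)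
  rw [val_evenIdx] at heven
  rw [val_oddIdx, heven] at hodd
  exact hodd

theorem forall_pos_even_eq_zero_iff (hω : ∀ k, (ω k).1 = false) :
    (∀ j : Fin m, pos ω (2 * j + 2) = 0) ↔
      ∀ j : Fin m, (ω (oddIdx j)).2 = !(ω (evenIdx j)).2 := by
  have step (j : Fin m) (hj : pos ω (2 * j) = 0) :
      pos ω (2 * j + 2) = 0 ↔ (ω (oddIdx j)).2 = !(ω (evenIdx j)).2 := by
    rw [pos_even_succ ω hω, hj]
    cases (ω (evenIdx j)).2 <;> cases (ω (oddIdx j)).2 <;> decide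
  refine ⟨fun h j => (step j ?_).1 (h j), fun h n => ?_⟩
  · obtain ⟨_ | i, hj⟩ := j
    · rfl
    · exact h ⟨i, by omega⟩
  · obtain ⟨n, hn⟩ := n
    induction n with
    | zero => exact (step _ rfl).2 (h _)
    | succ i ih => exact (step ⟨i + 1, hn⟩ (ih (by omega))).2 (h _)

/-- The outcome without resets whose steps `2j` are given by `b` and undone by the steps
`2j+1`. -/
def pairUp (b : Fin m → Bool) : Fin (2 * m) → Bool × Bool :=
  fun k => (false, xor (decide (k.1 % 2 = 1)) (b ⟨k / 2, by omega⟩))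

theorem pairUp_evenIdx (b : Fin m → Bool) (j : Fin m) : pairUp b (evenIdx j) = (false, b j) := by
  have : (2 * j.1) / 2 = j := by omega
  simp [pairUp, evenIdx, this]

theorem pairUp_oddIdx (b : Fin m → Bool) (j : Fin m) :
    pairUp b (oddIdx j) = (false, !b j) := by
  have : (2 * j.1 + 1) / 2 = j := by omega
  simp [pairUp, oddIdx, this]

theorem pairUp_injective : Function.Injective (pairUp (m := m)) := by
  intro b b' h
  funext j
  simpa [pairUp_evenIdx] using congrFun h (evenIdx j)

theorem mem_range_pairUp_iff :
    ω ∈ Set.range pairUp ↔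
      (∀ k, (ω k).1 = false) ∧ ∀ j : Fin m, (ω (oddIdx j)).2 = !(ω (evenIdx j)).2 := by
  constructor
  · rintro ⟨b, rfl⟩
    refine ⟨fun k => rfl, fun j => ?_⟩
    simp [pairUp_evenIdx, pairUp_oddIdx]
  · rintro ⟨hω, halt⟩
    refine ⟨fun j => (ω (evenIdx j)).2, funext fun k => ?_⟩
    obtain ⟨j, rfl | rfl⟩ := eq_evenIdx_or_eq_oddIdx k
    · rw [pairUp_evenIdx, ← hω (evenIdx j)]
    · rw [pairUp_oddIdx, ← halt, ← hω (oddIdx j)]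

theorem event_iff_mem_range_pairUp :
    (Ndot ω = 0 ∧ Ncross ω = m) ↔ ω ∈ Set.range pairUp := by
  rw [mem_range_pairUp_iff, ndot_eq_zero_iff]
  refine and_congr_right fun hω => ?_
  rw [ncross_eq_iff_forall_pos_even_eq_zero ω hω, forall_pos_even_eq_zero_iff ω hω]

end EvenHorizon

end ResetPolya

open ResetPolya

theorem statement16_general (r : ℝ) (m : ℕ) :
    prob r (2 * m) (fun ω => Ndot ω = 0 ∧ Ncross ω = m) =
      (1 - r) ^ (2 * m) * (2 : ℝ) ^ (-(m : ℤ)) := by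
  have hevent : univ.filter (fun ω : Fin (2 * m) → Bool × Bool => Ndot ω = 0 ∧ Ncross ω = m) =
      univ.image pairUp := by
    ext ω
    simp [event_iff_mem_range_pairUp]
  have hwt (b : Fin m → Bool) : wt r (pairUp b) = ((1 - r) / 2) ^ (2 * m) :=
    wt_of_forall_not_reset _ r fun _ => rfl
  rw [prob_eq_sum_filter, hevent, sum_image fun b _ b' _ h => pairUp_injective h]
  simp only [hwt, sum_const, card_univ, Fintype.card_fun,
    Fintype.card_bool, Fintype.card_fin, nsmul_eq_mul]
  rw [zpow_neg, zpow_natCast, div_pow]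
  push_cast
  field_simp
  ring

/-- The probability that the reset Pólya walk experiences no resetting event and
exactly `m` spontaneous returns to the origin up to the even time `2m` equals
`(1−r)^{2m}·2^{−m}`. -/
theorem statement16 (r : ℝ) (hr : r ∈ Set.Ioo (0 : ℝ) 1) (m : ℕ) :
    prob r (2 * m) (fun ω => Ndot ω = 0 ∧ Ncross ω = m) =
      (1 - r) ^ (2 * m) * (2 : ℝ) ^ (-(m : ℤ)) :=
  statement16_general r m
end
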